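/- arXiv:2503.00129 — 4 statements merged into one kernel-verified Lean document; each statement's English description precedes it below -/
import Mathlib

section
/- For any f ∈ L¹(ℝ), any C¹ function g: ℝ → ℝ, any measurable h, and any K ∈ L²(ℝ), one has ‖∫ f(τ−g(η)) h(η) K(η) dη‖_{L²_τ} ≲ ‖f‖_{L¹} ‖K‖_{L²} sup_η |h(η)|/√|g′(η)|. -/
open MeasureTheory

open MeasureTheory Set

open scoped ENNReal

lemma lint_image_1d {s : Set ℝ} {f : ℝ → ℝ} {f' : ℝ → ℝ}
    (hs : MeasurableSet s) (hf' : ∀ x ∈ s, HasDerivWithinAt f (f' x) s x)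
    (hf : InjOn f s) (φ : ℝ → ℝ≥0∞) :
    ∫⁻ x in f '' s, φ x = ∫⁻ x in s, ENNReal.ofReal |f' x| * φ (f x) := by
  simpa [ContinuousLinearMap.det_toSpanSingleton] using
    lintegral_image_eq_lintegral_abs_det_fderiv_mul volume hs
      (fun x hx => (hf' x hx).hasFDerivWithinAt) hf φ

lemma g_inj {g : ℝ → ℝ} (hg : ContDiff ℝ 1 g) (hg' : ∀ x, deriv g x ≠ 0) :
    Function.Injective g := by
  intro a b hab
  by_contra hne
  rcases lt_or_gt_of_ne hne with h | h
  · obtain ⟨c, _, hc⟩ := exists_deriv_eq_zero h hg.continuous.continuousOn hab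
    exact hg' c hc
  · obtain ⟨c, _, hc⟩ := exists_deriv_eq_zero h hg.continuous.continuousOn hab.symm
    exact hg' c hc


lemma g_qmp {g : ℝ → ℝ} (hg : ContDiff ℝ 1 g) (hg' : ∀ x, deriv g x ≠ 0) :
    Measure.QuasiMeasurePreserving g volume volume := by
  have hgm : Measurable g := hg.continuous.measurable
  refine ⟨hgm, Measure.AbsolutelyContinuous.mk fun N hN h0 => ?_⟩
  rw [Measure.map_apply hgm hN]
  set A := g ⁻¹' N with hAdef
  have hA : MeasurableSet A := hgm hN
  have hder : ∀ x ∈ A, HasDerivWithinAt g (deriv g x) A x := fun x _ =>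
    ((hg.differentiable one_ne_zero).differentiableAt.hasDerivAt).hasDerivWithinAt
  have key := lint_image_1d hA hder ((g_inj hg hg').injOn) (fun _ => 1)
  have h1 : volume (g '' A) = 0 :=
    measure_mono_null (Set.image_preimage_subset g N) h0
  rw [setLIntegral_one, h1] at key
  have hmeas : Measurable fun x => ENNReal.ofReal |deriv g x| :=
    ((hg.continuous_deriv le_rfl).abs.measurable).ennreal_ofReal
  have := (setLIntegral_eq_zero_iff hA hmeas).mp (by simpa using key.symm)
  have h2 : volume {a | a ∈ A ∧ ¬ deriv g a = 0} = 0 := by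
    simpa [Filter.EventuallyEq, ae_iff] using this
  have h3 : {a | a ∈ A ∧ ¬ deriv g a = 0} = A := by
    ext a; simp [hg' a]
  rwa [h3] at h2

lemma key_est (f g h K : ℝ → ℝ) (hfm : Measurable f) (hf : Integrable f)
    (hg : ContDiff ℝ 1 g) (hh : Measurable h) (hKm : Measurable K)
    (hg' : ∀ η, deriv g η ≠ 0) (S : ℝ) (hS : ∀ η, |h η| / Real.sqrt |deriv g η| ≤ S) :
    eLpNorm (fun τ => ∫ η : ℝ, f (τ - g η) * h η * K η) 2 volume ≤
      ENNReal.ofReal ((∫ x : ℝ, |f x|) * S) * eLpNorm K 2 volume := by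
  have hS0 : 0 ≤ S :=
    le_trans (div_nonneg (abs_nonneg _) (Real.sqrt_nonneg _)) (hS 0)
  have hgm : Measurable g := hg.continuous.measurable
  have hgd : ∀ x, HasDerivAt g (deriv g x) x := fun x =>
    (hg.differentiable one_ne_zero).differentiableAt.hasDerivAt
  -- notation
  set A : ℝ → ℝ → ℝ≥0∞ := fun τ η => (‖f (τ - g η)‖₊ : ℝ≥0∞) with hA
  set B : ℝ → ℝ≥0∞ := fun η => (‖h η‖₊ : ℝ≥0∞) with hB
  set C : ℝ → ℝ≥0∞ := fun η => (‖K η‖₊ : ℝ≥0∞) with hC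
  set q : ℝ → ℝ≥0∞ := fun η => ENNReal.ofReal (Real.sqrt |deriv g η|) with hq
  set F : ℝ≥0∞ := ∫⁻ x, (‖f x‖₊ : ℝ≥0∞) with hF
  set S' : ℝ≥0∞ := ENNReal.ofReal S with hS'
  have hq0 : ∀ η, q η ≠ 0 := fun η =>
    (ENNReal.ofReal_pos.mpr (Real.sqrt_pos.mpr (abs_pos.mpr (hg' η)))).ne'
  have hqt : ∀ η, q η ≠ ∞ := fun η => ENNReal.ofReal_ne_top
  have habs : ∀ η, |h η| ≤ S * Real.sqrt |deriv g η| := fun η => by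
    have := hS η
    rwa [div_le_iff₀ (Real.sqrt_pos.mpr (abs_pos.mpr (hg' η)))] at this
  have hBq : ∀ η, B η ≤ S' * q η := fun η => by
    rw [hB, hS', hq, ← ENNReal.ofReal_mul hS0]
    simp only [← enorm_eq_nnnorm, Real.enorm_eq_ofReal_abs]
    exact ENNReal.ofReal_le_ofReal (habs η)
  have hBq' : ∀ η, B η / q η ≤ S' := fun η =>
    ENNReal.div_le_of_le_mul (hBq η)
  have hBqq : ∀ η, B η * q η ≤ S' * ENNReal.ofReal |deriv g η| := fun η => by
    calc B η * q η ≤ S' * q η * q η := mul_le_mul_left (hBq η) _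
    _ = S' * (q η * q η) := by ring
    _ = S' * ENNReal.ofReal |deriv g η| := by
        rw [hq, ← ENNReal.ofReal_mul (Real.sqrt_nonneg _),
          Real.mul_self_sqrt (abs_nonneg _)]
  -- change of variables bound
  have hCOV : ∀ ψ : ℝ → ℝ≥0∞, ∫⁻ η, ENNReal.ofReal |deriv g η| * ψ (g η) ≤ ∫⁻ u, ψ u := by
    intro ψ
    have := lint_image_1d (f' := deriv g) MeasurableSet.univ
      (fun x _ => (hgd x).hasDerivWithinAt) ((g_inj hg hg').injOn) ψ
    rw [Measure.restrict_univ] at this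
    rw [← this]
    exact setLIntegral_le_lintegral _ _
  -- τ-integral of A
  have hFt : ∀ η, ∫⁻ τ, A τ η = F := fun η =>
    (measurePreserving_sub_right volume (g η)).lintegral_comp hfm.enorm
  -- η-integral bound via cov
  have hFs : ∀ τ, ∫⁻ η, ENNReal.ofReal |deriv g η| * A τ η ≤ F := by
    intro τ
    have := hCOV (fun u => (‖f (τ - u)‖₊ : ℝ≥0∞))
    refine le_trans (le_of_eq rfl) (this.trans (le_of_eq ?_))
    exact (Measure.measurePreserving_sub_left volume τ).lintegral_comp hfm.enorm
  -- measurability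
  have hmA : ∀ τ, Measurable (fun η => A τ η) := fun τ =>
    (hfm.comp (measurable_const.sub hgm)).enorm
  have hmB : Measurable B := hh.enorm
  have hmC : Measurable C := hKm.enorm
  have hmq : Measurable q :=
    (Real.continuous_sqrt.comp (hg.continuous_deriv le_rfl).abs).measurable.ennreal_ofReal
  set W : ℝ → ℝ≥0∞ := fun η => B η * (C η * C η) * (q η)⁻¹ with hW
  have hmW : Measurable W := ((hmB.mul (hmC.mul hmC)).mul hmq.inv)
  have hmAt : Measurable (Function.uncurry fun τ η => A τ η) :=
    (hfm.comp (measurable_fst.sub (hgm.comp measurable_snd))).enorm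
  have hconj : (2:ℝ).HolderConjugate 2 := Real.HolderConjugate.two_two
  have rpow_half_two : ∀ x : ℝ≥0∞, (x ^ (1/2:ℝ)) ^ (2:ℝ) = x := by
    intro x
    rw [← ENNReal.rpow_mul]
    norm_num
  have mul_self_half : ∀ x : ℝ≥0∞, (x * x) ^ (1/2:ℝ) = x := by
    intro x
    rw [← pow_two, ← ENNReal.rpow_natCast x 2, ← ENNReal.rpow_mul]
    norm_num
  -- Step 1: Cauchy-Schwarz in η for fixed τ
  have step1 : ∀ τ, (∫⁻ η, A τ η * B η * C η) ≤
      (S' * F) ^ (1/2:ℝ) * (∫⁻ η, A τ η * W η) ^ (1/2:ℝ) := by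
    intro τ
    set u : ℝ → ℝ≥0∞ := fun η => (A τ η * B η * q η) ^ (1/2:ℝ) with hu
    set v : ℝ → ℝ≥0∞ := fun η => (A τ η * W η) ^ (1/2:ℝ) with hv
    have huv : ∀ η, A τ η * B η * C η = u η * v η := by
      intro η
      rw [hu, hv, ← ENNReal.mul_rpow_of_nonneg _ _ (by norm_num : (0:ℝ) ≤ 1/2)]
      have hqq : q η * (q η)⁻¹ = 1 := ENNReal.mul_inv_cancel (hq0 η) (hqt η)
      have : A τ η * B η * q η * (A τ η * W η)
          = (A τ η * B η * C η) * (A τ η * B η * C η) * (q η * (q η)⁻¹) := by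
        rw [hW]; ring
      rw [this, hqq, mul_one, mul_self_half]
    have hmu : Measurable u := ((hmA τ).mul hmB |>.mul hmq).pow_const _
    have hmv : Measurable v := ((hmA τ).mul hmW).pow_const _
    have hold := ENNReal.lintegral_mul_le_Lp_mul_Lq volume hconj
      hmu.aemeasurable hmv.aemeasurable
    have hu2 : ∀ η, u η ^ (2:ℝ) = A τ η * B η * q η := fun η => rpow_half_two _
    have hv2 : ∀ η, v η ^ (2:ℝ) = A τ η * W η := fun η => rpow_half_two _
    have hint1 : ∫⁻ η, u η ^ (2:ℝ) ≤ S' * F := by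
      simp_rw [hu2]
      calc ∫⁻ η, A τ η * B η * q η
          ≤ ∫⁻ η, S' * (ENNReal.ofReal |deriv g η| * A τ η) := by
            refine lintegral_mono fun η => ?_
            calc A τ η * B η * q η = A τ η * (B η * q η) := by ring
            _ ≤ A τ η * (S' * ENNReal.ofReal |deriv g η|) :=
                mul_le_mul_right (hBqq η) _
            _ = S' * (ENNReal.ofReal |deriv g η| * A τ η) := by ring
        _ = S' * ∫⁻ η, ENNReal.ofReal |deriv g η| * A τ η :=
            lintegral_const_mul _ ((hg.continuous_deriv
              le_rfl).abs.measurable.ennreal_ofReal.mul (hmA τ))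
        _ ≤ S' * F := mul_le_mul_right (hFs τ) _
    calc (∫⁻ η, A τ η * B η * C η) = ∫⁻ η, u η * v η := by simp_rw [huv]
      _ ≤ (∫⁻ η, u η ^ (2:ℝ)) ^ (1/(2:ℝ)) * (∫⁻ η, v η ^ (2:ℝ)) ^ (1/(2:ℝ)) := by
          simpa using hold
      _ ≤ (S' * F) ^ (1/2:ℝ) * (∫⁻ η, A τ η * W η) ^ (1/2:ℝ) :=
          mul_le_mul' (ENNReal.rpow_le_rpow hint1 (by norm_num))
            (le_of_eq (by simp_rw [hv2]))
  -- Step 2: squared version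
  have step2 : ∀ τ, (∫⁻ η, A τ η * B η * C η) ^ (2:ℝ) ≤
      (S' * F) * ∫⁻ η, A τ η * W η := by
    intro τ
    calc (∫⁻ η, A τ η * B η * C η) ^ (2:ℝ)
        ≤ ((S' * F) ^ (1/2:ℝ) * (∫⁻ η, A τ η * W η) ^ (1/2:ℝ)) ^ (2:ℝ) :=
          ENNReal.rpow_le_rpow (step1 τ) (by norm_num)
      _ = (S' * F) * ∫⁻ η, A τ η * W η := by
          rw [ENNReal.mul_rpow_of_nonneg _ _ (by norm_num : (0:ℝ) ≤ 2),
            rpow_half_two, rpow_half_two]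
  -- Step 3: integrate in τ and swap
  have hswap : ∫⁻ τ, ∫⁻ η, A τ η * W η = ∫⁻ η, ∫⁻ τ, A τ η * W η := by
    refine lintegral_lintegral_swap ?_
    exact (hmAt.mul (hmW.comp measurable_snd)).aemeasurable
  have step3 : ∫⁻ τ, ∫⁻ η, A τ η * W η ≤ F * (S' * ∫⁻ η, C η * C η) := by
    rw [hswap]
    have hconst : ∀ η, ∫⁻ τ, A τ η * W η = F * W η := by
      intro η
      have hmArow : Measurable fun τ => A τ η :=
        (hfm.comp (measurable_sub_const (g η))).enorm
      rw [lintegral_mul_const _ hmArow, hFt η, mul_comm]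
    simp_rw [hconst]
    rw [lintegral_const_mul _ hmW]
    refine mul_le_mul_right ?_ _
    calc ∫⁻ η, W η ≤ ∫⁻ η, S' * (C η * C η) := by
          refine lintegral_mono fun η => ?_
          calc W η = (B η * (q η)⁻¹) * (C η * C η) := by rw [hW]; ring
          _ ≤ S' * (C η * C η) :=
              mul_le_mul_left (by rw [← div_eq_mul_inv]; exact hBq' η) _
      _ = S' * ∫⁻ η, C η * C η := lintegral_const_mul _ (hmC.mul hmC)
  -- Final assembly
  have rpow_two' : ∀ x : ℝ≥0∞, x ^ (2:ℝ) = x * x := by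
    intro x
    rw [show (2:ℝ) = ((2:ℕ):ℝ) by norm_num, ENNReal.rpow_natCast, pow_two]
  have hGbound : ∀ τ, (‖∫ η, f (τ - g η) * h η * K η‖₊ : ℝ≥0∞) ≤
      ∫⁻ η, A τ η * B η * C η := by
    intro τ
    calc (‖∫ η, f (τ - g η) * h η * K η‖₊ : ℝ≥0∞)
        ≤ ∫⁻ η, ‖f (τ - g η) * h η * K η‖₊ := enorm_integral_le_lintegral_enorm _
      _ = ∫⁻ η, A τ η * B η * C η := by
          refine lintegral_congr fun η => ?_
          rw [hA, hB, hC]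
          simp [nnnorm_mul, ENNReal.coe_mul]
  have hmint : Measurable fun τ => ∫⁻ η, A τ η * W η := by
    refine Measurable.lintegral_prod_right ?_
    exact hmAt.mul (hmW.comp measurable_snd)
  have hF_eq : F = ENNReal.ofReal (∫ x, |f x|) := by
    rw [hF]; simp only [← enorm_eq_nnnorm]; rw [← ofReal_integral_norm_eq_lintegral_enorm hf]
    simp [Real.norm_eq_abs]
  have hSF : S' * F = ENNReal.ofReal ((∫ x, |f x|) * S) := by
    rw [hF_eq, hS', ← ENNReal.ofReal_mul hS0, mul_comm]
  have hKnorm : eLpNorm K 2 volume = (∫⁻ η, C η * C η) ^ (1/2:ℝ) := by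
    rw [eLpNorm_eq_lintegral_rpow_enorm_toReal (by norm_num) (by norm_num)]
    norm_num
    congr 1
    exact lintegral_congr fun η => by rw [hC]; rw [pow_two]; rfl
  have main : ∫⁻ τ, (‖∫ η, f (τ - g η) * h η * K η‖₊ : ℝ≥0∞) ^ (2:ℝ) ≤
      (S' * F) * (S' * F) * ∫⁻ η, C η * C η := by
    calc ∫⁻ τ, (‖∫ η, f (τ - g η) * h η * K η‖₊ : ℝ≥0∞) ^ (2:ℝ)
        ≤ ∫⁻ τ, (∫⁻ η, A τ η * B η * C η) ^ (2:ℝ) :=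
          lintegral_mono fun τ => ENNReal.rpow_le_rpow (hGbound τ) (by norm_num)
      _ ≤ ∫⁻ τ, (S' * F) * ∫⁻ η, A τ η * W η := lintegral_mono fun τ => step2 τ
      _ = (S' * F) * ∫⁻ τ, ∫⁻ η, A τ η * W η := lintegral_const_mul _ hmint
      _ ≤ (S' * F) * (F * (S' * ∫⁻ η, C η * C η)) := mul_le_mul_right step3 _
      _ = (S' * F) * (S' * F) * ∫⁻ η, C η * C η := by ring
  calc eLpNorm (fun τ => ∫ η : ℝ, f (τ - g η) * h η * K η) 2 volume
      = (∫⁻ τ, (‖∫ η, f (τ - g η) * h η * K η‖₊ : ℝ≥0∞) ^ (2:ℝ)) ^ (1/2:ℝ) := by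
        rw [eLpNorm_eq_lintegral_rpow_enorm_toReal (by norm_num) (by norm_num)]
        norm_num
        rfl
    _ ≤ ((S' * F) * (S' * F) * ∫⁻ η, C η * C η) ^ (1/2:ℝ) :=
        ENNReal.rpow_le_rpow main (by norm_num)
    _ = ((S' * F) * (S' * F)) ^ (1/2:ℝ) * (∫⁻ η, C η * C η) ^ (1/2:ℝ) :=
        ENNReal.mul_rpow_of_nonneg _ _ (by norm_num)
    _ = (S' * F) * (∫⁻ η, C η * C η) ^ (1/2:ℝ) := by rw [mul_self_half]
    _ = ENNReal.ofReal ((∫ x, |f x|) * S) * eLpNorm K 2 volume := by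
        rw [hSF, hKnorm]

theorem stmt2 :
    ∃ C > 0, ∀ (f g h K : ℝ → ℝ),
      Integrable f → ContDiff ℝ 1 g → Measurable h → MemLp K 2 volume →
      (∀ η, deriv g η ≠ 0) →
      ∀ S : ℝ, (∀ η, |h η| / Real.sqrt |deriv g η| ≤ S) →
      eLpNorm (fun τ => ∫ η : ℝ, f (τ - g η) * h η * K η) 2 volume ≤
        ENNReal.ofReal (C * (∫ x : ℝ, |f x|) * S) * eLpNorm K 2 volume := by
  refine ⟨1, one_pos, ?_⟩
  intro f g h K hf hg hh hK hg' S hS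
  have hfae := hf.aestronglyMeasurable
  set f₁ := hfae.mk f with hf₁
  have hff₁ : f =ᵐ[volume] f₁ := hfae.ae_eq_mk
  have hf₁m : Measurable f₁ := hfae.stronglyMeasurable_mk.measurable
  have hKae := hK.aestronglyMeasurable
  set K₁ := hKae.mk K with hK₁
  have hKK₁ : K =ᵐ[volume] K₁ := hKae.ae_eq_mk
  have hK₁m : Measurable K₁ := hKae.stronglyMeasurable_mk.measurable
  have hqmpτ : ∀ τ : ℝ, Measure.QuasiMeasurePreserving (fun η => τ - g η) volume volume :=
    fun τ => ((Measure.measurePreserving_sub_left volume τ).quasiMeasurePreserving).comp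
      (g_qmp hg hg')
  have hinner : ∀ τ, (∫ η, f (τ - g η) * h η * K η) = ∫ η, f₁ (τ - g η) * h η * K₁ η := by
    intro τ
    refine integral_congr_ae ?_
    have h1 : (fun η => f (τ - g η)) =ᵐ[volume] fun η => f₁ (τ - g η) :=
      (hqmpτ τ).ae_eq_comp hff₁
    filter_upwards [h1, hKK₁] with η e1 e2
    show f (τ - g η) * h η * K η = f₁ (τ - g η) * h η * K₁ η
    have e1' : f (τ - g η) = f₁ (τ - g η) := e1
    rw [e1', e2]
  rw [show (fun τ => ∫ η : ℝ, f (τ - g η) * h η * K η)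
      = fun τ => ∫ η : ℝ, f₁ (τ - g η) * h η * K₁ η from funext hinner]
  have hfint : (∫ x, |f x|) = ∫ x, |f₁ x| :=
    integral_congr_ae (hff₁.mono fun x hx => by dsimp only; rw [hx])
  have hKnorm : eLpNorm K 2 volume = eLpNorm K₁ 2 volume := eLpNorm_congr_ae hKK₁
  rw [hfint, hKnorm, one_mul]
  exact key_est f₁ g h K₁ hf₁m (hf.congr hff₁) hg hh hK₁m hg' S hS
end

section
/- Fix 0 ≤ α < 1 and M, N ≥ 1. If f: ℝ² → ℝ is C¹ with |∂f/∂x| ≳ N everywhere, then ∫∫_{|x|,|y|<M} ⟨f(x,y)⟩^{−α} dx dy ≲ M^{2−α} N^{−α}. -/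
open MeasureTheory

noncomputable def jb (x : ℝ) : ℝ := Real.sqrt (1 + x ^ 2)

open Set intervalIntegral

lemma one_le_jb (z : ℝ) : 1 ≤ jb z :=
  Real.one_le_sqrt.mpr (by nlinarith)

lemma abs_le_jb (z : ℝ) : |z| ≤ jb z := by
  rw [jb, ← Real.sqrt_sq_eq_abs]
  exact Real.sqrt_le_sqrt (by nlinarith)

lemma jb_pos (z : ℝ) : 0 < jb z := lt_of_lt_of_le one_pos (one_le_jb z)

-- growth lemma, monotone case
lemma grow_of_deriv_ge (g : ℝ → ℝ) (hg : ContDiff ℝ 1 g) (N : ℝ) (hN : 0 < N)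
    (h : ∀ x, N ≤ deriv g x) : ∃ x0, ∀ x, N * |x - x0| ≤ |g x| := by
  have hdiff : Differentiable ℝ g := hg.differentiable one_ne_zero
  have hd : ∀ x : ℝ, HasDerivAt (fun y => g y - N * y) (deriv g x - N) x := by
    intro x
    exact ((hdiff x).hasDerivAt).sub (by simpa using (hasDerivAt_id x).const_mul N)
  have hmono : Monotone (fun x => g x - N * x) := by
    apply monotone_of_deriv_nonneg (fun x => (hd x).differentiableAt)
    intro x
    rw [(hd x).deriv]; linarith [h x]
  have key : ∀ a b, a ≤ b → g a + N * (b - a) ≤ g b := by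
    intro a b hab
    have := hmono hab
    simp only at this
    nlinarith
  set b := |g 0| / N + 1 with hb
  have hb0 : 0 ≤ b := by positivity
  have hNb : N * b = |g 0| + N := by rw [hb, mul_add, mul_one]; congr 1; field_simp
  have hgb : 0 < g b := by
    have := key 0 b hb0
    have h1 : -|g 0| ≤ g 0 := neg_abs_le _
    nlinarith
  have hga : g (-b) < 0 := by
    have := key (-b) 0 (by linarith)
    have h1 : g 0 ≤ |g 0| := le_abs_self _
    nlinarith
  obtain ⟨x0, hx0m, hx0⟩ := intermediate_value_Icc (by linarith : (-b:ℝ) ≤ b)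
    (hg.continuous.continuousOn) (⟨hga.le, hgb.le⟩ : (0:ℝ) ∈ Icc (g (-b)) (g b))
  refine ⟨x0, fun x => ?_⟩
  rcases le_total x0 x with hx | hx
  · have h2 := key x0 x hx
    rw [hx0] at h2
    rw [abs_of_nonneg (by linarith : (0:ℝ) ≤ x - x0),
      abs_of_nonneg (by nlinarith : (0:ℝ) ≤ g x)]
    nlinarith
  · have h2 := key x x0 hx
    rw [hx0] at h2
    rw [abs_of_nonpos (by linarith : x - x0 ≤ 0),
      abs_of_nonpos (by nlinarith : g x ≤ 0)]
    nlinarith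

lemma exists_x0 (g : ℝ → ℝ) (hg : ContDiff ℝ 1 g) (N : ℝ) (hN : 0 < N)
    (h : ∀ x, N ≤ |deriv g x|) : ∃ x0, ∀ x, N * |x - x0| ≤ |g x| := by
  have hdc : Continuous (deriv g) := hg.continuous_deriv le_rfl
  have hsign : ∀ a b : ℝ, deriv g a < 0 → 0 < deriv g b → False := by
    intro a b ha hb
    have h0 : (0:ℝ) ∈ uIcc (deriv g a) (deriv g b) := by
      rw [mem_uIcc]; left; exact ⟨ha.le, hb.le⟩
    obtain ⟨c, _, hc⟩ := intermediate_value_uIcc (hdc.continuousOn (s := uIcc a b)) h0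
    have := h c
    rw [hc] at this
    simp at this; linarith
  have habs : ∀ x, N ≤ deriv g x ∨ deriv g x ≤ -N := by
    intro x
    rcases le_abs.mp (h x) with h1 | h1
    · exact Or.inl h1
    · exact Or.inr (by linarith)
  rcases habs 0 with h0 | h0
  · apply grow_of_deriv_ge g hg N hN
    intro x
    rcases habs x with hx | hx
    · exact hx
    · exact (hsign x 0 (by linarith) (by linarith)).elim
  · have hneg : ∀ x, N ≤ deriv (fun y => -g y) x := by
      intro x
      have : deriv (fun y => -g y) x = -deriv g x := deriv.neg
      rw [this]
      rcases habs x with hx | hx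
      · exact (hsign 0 x (by linarith) (by linarith)).elim
      · linarith
    obtain ⟨x0, hx0⟩ := grow_of_deriv_ge (fun y => -g y) hg.neg N hN hneg
    exact ⟨x0, fun x => by simpa using hx0 x⟩

lemma integral_H_bound (α M N x0 : ℝ) (hα0 : 0 ≤ α) (hα1 : α < 1) (hM : 1 ≤ M)
    (hN : 1 ≤ N) (hx0 : x0 ∈ Icc (-M) M) :
    ∫ x in Ioo (-M) M, (max (1/N) |x - x0|) ^ (-α) ≤
      (2/N) * (1/N) ^ (-α) + 2 * (2*M) ^ (1-α) / (1-α) := by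
  have hN0 : (0:ℝ) < N := by linarith
  have hM0 : (0:ℝ) < M := by linarith
  have hNM : 1/N ≤ 2*M := by
    have : 1/N ≤ 1 := by rw [div_le_one hN0]; exact hN
    linarith
  set H0 : ℝ → ℝ := fun u => (max (1/N) |u|) ^ (-α) with hH0
  have hpos : ∀ u : ℝ, (0:ℝ) < max (1/N) |u| :=
    fun u => lt_of_lt_of_le (by positivity) (le_max_left _ _)
  have hH0c : Continuous H0 :=
    (continuous_const.max continuous_abs).rpow_const (fun u => Or.inl (ne_of_gt (hpos u)))
  have hH0nn : ∀ u : ℝ, 0 ≤ H0 u := fun u => Real.rpow_nonneg (le_of_lt (hpos u)) _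
  have hHc : Continuous (fun x => H0 (x - x0)) := hH0c.comp (continuous_id.sub continuous_const)
  -- step 1-2: set integral = interval integral, enlarge
  have step1 : ∫ x in Ioo (-M) M, (max (1/N) |x - x0|) ^ (-α)
      = ∫ x in (-M)..M, H0 (x - x0) := by
    rw [intervalIntegral.integral_of_le (by linarith : -M ≤ M), integral_Ioc_eq_integral_Ioo]
  have step2 : (∫ x in (-M)..M, H0 (x - x0)) ≤ ∫ x in (x0-2*M)..(x0+2*M), H0 (x - x0) := by
    apply integral_mono_interval (by linarith [hx0.2] : x0-2*M ≤ -M) (by linarith : -M ≤ M)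
      (by linarith [hx0.1] : M ≤ x0+2*M)
      (Filter.Eventually.of_forall (fun x => hH0nn _)) (hHc.intervalIntegrable _ _)
  have step3 : (∫ x in (x0-2*M)..(x0+2*M), H0 (x - x0)) = ∫ u in (-(2*M))..(2*M), H0 u := by
    rw [intervalIntegral.integral_comp_sub_right (a := x0-2*M) (b := x0+2*M) H0 x0]
    congr 1 <;> ring
  -- split
  have hii : ∀ a b : ℝ, IntervalIntegrable H0 volume a b := fun a b => hH0c.intervalIntegrable _ _
  have split1 : ∫ u in (-(2*M))..(2*M), H0 u
      = (∫ u in (-(2*M))..(-(1/N)), H0 u) + (∫ u in (-(1/N))..(1/N), H0 u)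
        + ∫ u in (1/N)..(2*M), H0 u := by
    rw [integral_add_adjacent_intervals (hii _ _) (hii _ _),
      integral_add_adjacent_intervals (hii _ _) (hii _ _)]
  -- middle
  have mid : (∫ u in (-(1/N))..(1/N), H0 u) = (2/N) * (1/N) ^ (-α) := by
    have : EqOn H0 (fun _ => (1/N : ℝ) ^ (-α)) (uIcc (-(1/N)) (1/N)) := by
      intro u hu
      rw [uIcc_of_le (by linarith [one_div_pos.mpr hN0] : -(1/N) ≤ 1/N)] at hu
      have : |u| ≤ 1/N := abs_le.mpr ⟨by linarith [hu.1], hu.2⟩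
      simp only [hH0, max_eq_left this]
    rw [intervalIntegral.integral_congr this, intervalIntegral.integral_const]
    rw [smul_eq_mul]; ring_nf
  -- right
  have rt : (∫ u in (1/N)..(2*M), H0 u) = ((2*M) ^ (-α+1) - (1/N) ^ (-α+1))/(-α+1) := by
    have : EqOn H0 (fun u => u ^ (-α)) (uIcc (1/N) (2*M)) := by
      intro u hu
      rw [uIcc_of_le hNM] at hu
      have h1 : 1/N ≤ u := hu.1
      have h2 : (0:ℝ) < u := lt_of_lt_of_le (by positivity) h1
      simp only [hH0, abs_of_pos h2, max_eq_right h1]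
    rw [intervalIntegral.integral_congr this,
      integral_rpow (Or.inl (by linarith : (-1:ℝ) < -α))]
  -- left
  have lt' : (∫ u in (-(2*M))..(-(1/N)), H0 u) = ∫ u in (1/N)..(2*M), H0 u := by
    rw [← intervalIntegral.integral_comp_neg H0]
    apply intervalIntegral.integral_congr
    intro u _
    simp [hH0, abs_neg]
  -- combine
  have hrt_le : ((2*M) ^ (-α+1) - (1/N) ^ (-α+1))/(-α+1) ≤ (2*M) ^ (1-α) / (1-α) := by
    have h1 : (0:ℝ) ≤ (1/N) ^ (1-α) := Real.rpow_nonneg (by positivity) _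
    have h2 : (0:ℝ) < 1 - α := by linarith
    have h3 : (-α+1 : ℝ) = 1-α := by ring
    rw [h3]
    gcongr
    linarith
  calc ∫ x in Ioo (-M) M, (max (1/N) |x - x0|) ^ (-α)
      = ∫ x in (-M)..M, H0 (x - x0) := step1
    _ ≤ ∫ x in (x0-2*M)..(x0+2*M), H0 (x - x0) := step2
    _ = ∫ u in (-(2*M))..(2*M), H0 u := step3
    _ = (∫ u in (-(2*M))..(-(1/N)), H0 u) + (∫ u in (-(1/N))..(1/N), H0 u)
        + ∫ u in (1/N)..(2*M), H0 u := split1.symm ▸ rfl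
    _ ≤ (2*M) ^ (1-α) / (1-α) + (2/N) * (1/N) ^ (-α) + (2*M) ^ (1-α) / (1-α) := by
        rw [lt', mid, rt]
        have := hrt_le
        gcongr <;> linarith
    _ = (2/N) * (1/N) ^ (-α) + 2 * (2*M) ^ (1-α) / (1-α) := by ring

lemma jb_continuous : Continuous jb := by
  unfold jb
  exact Real.continuous_sqrt.comp (by continuity)

lemma inner_bound (α M N : ℝ) (hα0 : 0 ≤ α) (hα1 : α < 1) (hM : 1 ≤ M) (hN : 1 ≤ N)
    (g : ℝ → ℝ) (hg : ContDiff ℝ 1 g) (hder : ∀ x, N ≤ |deriv g x|) :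
    ∫ x in Ioo (-M) M, jb (g x) ^ (-α) ≤ (2 + 4/(1-α)) * M ^ (1-α) * N ^ (-α) := by
  have hN0 : (0:ℝ) < N := by linarith
  have hM0 : (0:ℝ) < M := by linarith
  obtain ⟨y0, hy0⟩ := exists_x0 g hg N hN0 hder
  set x0 : ℝ := max (-M) (min M y0) with hx0def
  have hx0 : x0 ∈ Icc (-M) M := by
    constructor
    · exact le_max_left _ _
    · rcases le_total (-M) (min M y0) with h | h
      · rw [hx0def, max_eq_right h]; exact min_le_left _ _
      · rw [hx0def, max_eq_left h]; linarith
  have hclamp : ∀ x ∈ Icc (-M) M, |x - x0| ≤ |x - y0| := by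
    intro x hx
    rcases le_total y0 (-M) with h1 | h1
    · have : x0 = -M := by
        rw [hx0def, min_eq_right (by linarith : y0 ≤ M), max_eq_left h1]
      rw [this, abs_of_nonneg (by linarith [hx.1] : (0:ℝ) ≤ x - -M)]
      calc x - -M ≤ x - y0 := by linarith
        _ ≤ |x - y0| := le_abs_self _
    · rcases le_total M y0 with h2 | h2
      · have : x0 = M := by
          rw [hx0def, min_eq_left h2, max_eq_right (by linarith : -M ≤ M)]
        rw [this, abs_of_nonpos (by linarith [hx.2] : x - M ≤ 0)]
        calc -(x - M) = M - x := by ring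
          _ ≤ y0 - x := by linarith
          _ ≤ |x - y0| := by rw [abs_sub_comm]; exact le_abs_self _
      · have : x0 = y0 := by rw [hx0def, min_eq_right h2, max_eq_right h1]
        rw [this]
  -- pointwise bound
  have hpt : ∀ x ∈ Ioo (-M) M, jb (g x) ^ (-α) ≤ N ^ (-α) * (max (1/N) |x - x0|) ^ (-α) := by
    intro x hx
    have hxm : x ∈ Icc (-M) M := Ioo_subset_Icc_self hx
    have hmaxpos : (0:ℝ) < max (1/N) |x - x0| :=
      lt_of_lt_of_le (by positivity) (le_max_left _ _)
    have key : N * max (1/N) |x - x0| ≤ jb (g x) := by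
      rw [mul_max_of_nonneg _ _ hN0.le, mul_one_div_cancel hN0.ne']
      apply max_le (one_le_jb _)
      calc N * |x - x0| ≤ N * |x - y0| := by
            apply mul_le_mul_of_nonneg_left (hclamp x hxm) hN0.le
        _ ≤ |g x| := hy0 x
        _ ≤ jb (g x) := abs_le_jb _
    have := Real.rpow_le_rpow_of_nonpos (by positivity : (0:ℝ) < N * max (1/N) |x - x0|)
      key (by linarith : -α ≤ 0)
    calc jb (g x) ^ (-α) ≤ (N * max (1/N) |x - x0|) ^ (-α) := this
      _ = N ^ (-α) * (max (1/N) |x - x0|) ^ (-α) := Real.mul_rpow hN0.le hmaxpos.le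
  -- integrability
  have hcont1 : Continuous (fun x => jb (g x) ^ (-α)) :=
    (jb_continuous.comp hg.continuous).rpow_const (fun x => Or.inl (jb_pos _).ne')
  have hcont2 : Continuous (fun x : ℝ => N ^ (-α) * (max (1/N) |x - x0|) ^ (-α)) := by
    apply continuous_const.mul
    exact (continuous_const.max ((continuous_id.sub continuous_const).abs)).rpow_const
      (fun x => Or.inl (ne_of_gt (lt_of_lt_of_le (by positivity) (le_max_left _ _))))
  have hint1 : IntegrableOn (fun x => jb (g x) ^ (-α)) (Ioo (-M) M) :=
    (hcont1.continuousOn.integrableOn_Icc).mono_set Ioo_subset_Icc_self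
  have hint2 : IntegrableOn (fun x : ℝ => N ^ (-α) * (max (1/N) |x - x0|) ^ (-α)) (Ioo (-M) M) :=
    (hcont2.continuousOn.integrableOn_Icc).mono_set Ioo_subset_Icc_self
  calc ∫ x in Ioo (-M) M, jb (g x) ^ (-α)
      ≤ ∫ x in Ioo (-M) M, N ^ (-α) * (max (1/N) |x - x0|) ^ (-α) :=
        setIntegral_mono_on hint1 hint2 measurableSet_Ioo hpt
    _ = N ^ (-α) * ∫ x in Ioo (-M) M, (max (1/N) |x - x0|) ^ (-α) := integral_const_mul _ _
    _ ≤ N ^ (-α) * ((2/N) * (1/N) ^ (-α) + 2 * (2*M) ^ (1-α) / (1-α)) := by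
        apply mul_le_mul_of_nonneg_left (integral_H_bound α M N x0 hα0 hα1 hM hN hx0)
          (Real.rpow_nonneg hN0.le _)
    _ ≤ (2 + 4/(1-α)) * M ^ (1-α) * N ^ (-α) := by
        have e1 : (1/N : ℝ) ^ (-α) = (N ^ (-α))⁻¹ := by
          rw [one_div, Real.inv_rpow hN0.le]
        have hNα : (0:ℝ) < N ^ (-α) := Real.rpow_pos_of_pos hN0 _
        have e2 : N ^ (-α) * ((2/N) * (1/N) ^ (-α)) = 2/N := by
          rw [e1]; field_simp
        have h2M : (2*M:ℝ) ^ (1-α) ≤ 2 * M ^ (1-α) := by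
          rw [Real.mul_rpow (by norm_num) hM0.le]
          apply mul_le_mul_of_nonneg_right _ (Real.rpow_nonneg hM0.le _)
          calc (2:ℝ) ^ (1-α) ≤ 2 ^ (1:ℝ) :=
                Real.rpow_le_rpow_of_exponent_le (by norm_num) (by linarith)
            _ = 2 := Real.rpow_one 2
        have hMα : (1:ℝ) ≤ M ^ (1-α) := Real.one_le_rpow hM (by linarith)
        have hNinv : 1/N ≤ N ^ (-α) := by
          rw [one_div, ← Real.rpow_neg_one]
          exact Real.rpow_le_rpow_of_exponent_le hN (by linarith)
        have h1α : (0:ℝ) < 1 - α := by linarith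
        rw [mul_add, e2]
        have t1 : 2/N ≤ 2 * M ^ (1-α) * N ^ (-α) := by
          calc 2/N = 2 * (1/N) := by ring
            _ ≤ 2 * N ^ (-α) := by linarith
            _ ≤ 2 * M ^ (1-α) * N ^ (-α) := by nlinarith
        have t2 : N ^ (-α) * (2 * (2*M) ^ (1-α) / (1-α)) ≤ 4/(1-α) * M ^ (1-α) * N ^ (-α) := by
          calc N ^ (-α) * (2 * (2*M) ^ (1-α) / (1-α)) = N ^ (-α) * (2 * (2*M) ^ (1-α)) / (1-α) := by ring
            _ ≤ N ^ (-α) * (4 * M ^ (1-α)) / (1-α) := by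
                rw [div_le_div_iff_of_pos_right h1α]
                nlinarith
            _ = 4/(1-α) * M ^ (1-α) * N ^ (-α) := by ring
        calc 2/N + N ^ (-α) * (2 * (2*M) ^ (1-α) / (1-α))
            ≤ 2 * M ^ (1-α) * N ^ (-α) + 4/(1-α) * M ^ (1-α) * N ^ (-α) := by linarith
          _ = (2 + 4/(1-α)) * M ^ (1-α) * N ^ (-α) := by ring

theorem stmt3 (α : ℝ) (hα0 : 0 ≤ α) (hα1 : α < 1) :
    ∃ C > 0, ∀ M N : ℝ, 1 ≤ M → 1 ≤ N →
      ∀ f : ℝ × ℝ → ℝ, ContDiff ℝ 1 f →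
      (∀ p : ℝ × ℝ, N ≤ |deriv (fun x => f (x, p.2)) p.1|) →
      (∫ p in {p : ℝ × ℝ | |p.1| < M ∧ |p.2| < M}, (jb (f p)) ^ (-α)) ≤
        C * M ^ (2 - α) * N ^ (-α) := by
  have h1α : (0:ℝ) < 1 - α := by linarith
  refine ⟨2 * (2 + 4/(1-α)), by positivity, ?_⟩
  intro M N hM hN f hf hd
  have hM0 : (0:ℝ) < M := by linarith
  have hN0 : (0:ℝ) < N := by linarith
  set s : Set ℝ := Ioo (-M) M with hs
  set F : ℝ × ℝ → ℝ := fun p => jb (f p) ^ (-α) with hF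
  have hset : {p : ℝ × ℝ | |p.1| < M ∧ |p.2| < M} = s ×ˢ s := by
    ext p; simp [hs, abs_lt, and_assoc]
  have hFc : Continuous F :=
    (jb_continuous.comp hf.continuous).rpow_const (fun p => Or.inl (jb_pos _).ne')
  have hKint : IntegrableOn F (Icc (-M) M ×ˢ Icc (-M) M) volume :=
    hFc.continuousOn.integrableOn_compact (isCompact_Icc.prod isCompact_Icc)
  have hint : IntegrableOn F (s ×ˢ s) volume :=
    hKint.mono_set (prod_mono Ioo_subset_Icc_self Ioo_subset_Icc_self)
  have hint' : Integrable F ((volume.restrict s).prod (volume.restrict s)) := by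
    rw [Measure.prod_restrict]
    rw [← Measure.volume_eq_prod ℝ ℝ]
    exact hint
  set B : ℝ := (2 + 4/(1-α)) * M ^ (1-α) * N ^ (-α) with hB
  have hBnn : 0 ≤ B := by
    have h4 : (0:ℝ) < 4/(1-α) := by positivity
    have := Real.rpow_nonneg hM0.le (1-α)
    have := Real.rpow_nonneg hN0.le (-α)
    positivity
  have hinner : ∀ y : ℝ, (∫ x in s, F (x, y)) ≤ B := by
    intro y
    have hg : ContDiff ℝ 1 (fun x => f (x, y)) := hf.comp (contDiff_id.prodMk contDiff_const)
    have hder : ∀ x, N ≤ |deriv (fun x' => f (x', y)) x| := fun x => hd (x, y)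
    exact inner_bound α M N hα0 hα1 hM hN _ hg hder
  have hfub : (∫ p in s ×ˢ s, F p) = ∫ y in s, ∫ x in s, F (x, y) := by
    rw [show (volume : Measure (ℝ × ℝ)) = Measure.prod volume volume from Measure.volume_eq_prod ℝ ℝ,
      ← Measure.prod_restrict]
    exact integral_prod_symm F hint'
  have houter_int : Integrable (fun y => ∫ x in s, F (x, y)) (volume.restrict s) :=
    hint'.integral_prod_right
  have hμs : volume s ≠ ⊤ := by
    rw [hs, Real.volume_Ioo]; exact ENNReal.ofReal_ne_top
  calc (∫ p in {p : ℝ × ℝ | |p.1| < M ∧ |p.2| < M}, F p)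
      = ∫ y in s, ∫ x in s, F (x, y) := by rw [hset, hfub]
    _ ≤ ∫ _ in s, B := by
        apply setIntegral_mono_on houter_int
          (integrableOn_const hμs)
          measurableSet_Ioo (fun y _ => hinner y)
    _ = (2*M) * B := by
        rw [setIntegral_const, smul_eq_mul, hs, Real.volume_real_Ioo,
          max_eq_left (by linarith : (0:ℝ) ≤ M - -M)]
        ring
    _ = 2 * (2 + 4/(1-α)) * M ^ (2-α) * N ^ (-α) := by
        have hMM : M ^ ((2:ℝ)-α) = M * M ^ (1-α) := by
          rw [show (2-α:ℝ) = 1 + (1-α) by ring, Real.rpow_add hM0, Real.rpow_one]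
        rw [hB, hMM]; ring
end

section
/- For s > 1/2, one has sup_{ξ₁ ∈ ℝ} ∫_ℝ |ξ₂² − ξ₁² − 1|^{−1/2} ⟨ξ⟩^{−(2s−1)} dξ₂ ≲ 1, where ⟨ξ⟩ = (1+ξ₁²+ξ₂²)^{1/2}. -/
open MeasureTheory

noncomputable def jb2 (ξ : ℝ × ℝ) : ℝ := Real.sqrt (1 + ξ.1 ^ 2 + ξ.2 ^ 2)

theorem stmt6 (s : ℝ) (hs : 1 / 2 < s) :
    ∃ C > 0, ∀ ξ₁ : ℝ,
      (∫ ξ₂ : ℝ, |ξ₂ ^ 2 - ξ₁ ^ 2 - 1| ^ (-(1 : ℝ) / 2) * (jb2 (ξ₁, ξ₂)) ^ (-(2 * s - 1))) ≤ C := by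
  set g : ℝ → ℝ := fun t => |t ^ 2 - 1| ^ (-(1 : ℝ) / 2) * (Real.sqrt (1 + t ^ 2)) ^ (-(2 * s - 1))
    with hg
  set I : ℝ := ∫ t : ℝ, g t with hIdef
  have hInn : 0 ≤ I := integral_nonneg fun t =>
    mul_nonneg (Real.rpow_nonneg (abs_nonneg _) _) (Real.rpow_nonneg (Real.sqrt_nonneg _) _)
  refine ⟨I + 1, by linarith, fun ξ₁ => ?_⟩
  have ha1 : (1 : ℝ) ≤ Real.sqrt (1 + ξ₁ ^ 2) := by
    have := Real.sqrt_le_sqrt (show (1 : ℝ) ≤ 1 + ξ₁ ^ 2 by nlinarith [sq_nonneg ξ₁])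
    simpa using this
  set a := Real.sqrt (1 + ξ₁ ^ 2) with hadef
  have ha0 : 0 < a := lt_of_lt_of_le one_pos ha1
  have ha2 : a ^ 2 = 1 + ξ₁ ^ 2 := Real.sq_sqrt (by positivity)
  set f : ℝ → ℝ := fun ξ₂ => |ξ₂ ^ 2 - ξ₁ ^ 2 - 1| ^ (-(1 : ℝ) / 2) * (jb2 (ξ₁, ξ₂)) ^ (-(2 * s - 1))
    with hf
  have key : ∀ t : ℝ, f (a * t) = (a⁻¹ * a ^ (-(2 * s - 1))) * g t := by
    intro t
    have h1 : |(a * t) ^ 2 - ξ₁ ^ 2 - 1| = a ^ 2 * |t ^ 2 - 1| := by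
      have : (a * t) ^ 2 - ξ₁ ^ 2 - 1 = a ^ 2 * (t ^ 2 - 1) := by rw [mul_pow, ha2]; ring
      rw [this, abs_mul, abs_of_nonneg (sq_nonneg a)]
    have h2 : jb2 (ξ₁, a * t) = a * Real.sqrt (1 + t ^ 2) := by
      have : (1 : ℝ) + ξ₁ ^ 2 + (a * t) ^ 2 = a ^ 2 * (1 + t ^ 2) := by rw [mul_pow, ha2]; ring
      rw [jb2, this, Real.sqrt_mul (sq_nonneg a), Real.sqrt_sq ha0.le]
    have h3 : (a ^ 2 * |t ^ 2 - 1|) ^ (-(1 : ℝ) / 2) =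
        a⁻¹ * |t ^ 2 - 1| ^ (-(1 : ℝ) / 2) := by
      rw [Real.mul_rpow (sq_nonneg a) (abs_nonneg _), ← Real.rpow_natCast a 2,
        ← Real.rpow_mul ha0.le]
      norm_num [Real.rpow_neg_one]
    have h4 : (a * Real.sqrt (1 + t ^ 2)) ^ (-(2 * s - 1)) =
        a ^ (-(2 * s - 1)) * (Real.sqrt (1 + t ^ 2)) ^ (-(2 * s - 1)) :=
      Real.mul_rpow ha0.le (Real.sqrt_nonneg _)
    simp only [hf, hg, h1, h2, h3, h4]
    ring
  have hscale : ∫ ξ₂ : ℝ, f ξ₂ = a ^ (-(2 * s - 1)) * I := by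
    have h5 : (∫ t : ℝ, f (a * t)) = |a⁻¹| • ∫ y : ℝ, f y :=
      MeasureTheory.Measure.integral_comp_mul_left f a
    have h6 : (∫ t : ℝ, f (a * t)) = (a⁻¹ * a ^ (-(2 * s - 1))) * I := by
      simp_rw [key]
      rw [integral_const_mul]
    rw [h6, abs_of_pos (inv_pos.mpr ha0), smul_eq_mul] at h5
    have hane : a⁻¹ ≠ 0 := inv_ne_zero ha0.ne'
    exact (mul_left_cancel₀ hane (show a⁻¹ * (a ^ (-(2 * s - 1)) * I) = a⁻¹ * ∫ y : ℝ, f y by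
      rw [← h5]; ring)).symm
  calc (∫ ξ₂ : ℝ, f ξ₂) = a ^ (-(2 * s - 1)) * I := hscale
    _ ≤ 1 * I := by
        apply mul_le_mul_of_nonneg_right _ hInn
        exact Real.rpow_le_one_of_one_le_of_nonpos ha1 (by linarith)
    _ ≤ I + 1 := by linarith
end

section
/- For −1/2 < s < 1/2, the weight m(ξ₂) = ||ξ₂| − 1|^{1/2} (|ξ₂| + 1)^{2s − 1/2} is a Muckenhoupt A₂ weight on ℝ, i.e., sup over intervals I of (|I|^{−1}∫_I m)(|I|^{−1}∫_I m^{−1}) is finite. -/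
open MeasureTheory Real

noncomputable def mwt (s x : ℝ) : ℝ := |(|x| - 1)| ^ ((1 : ℝ) / 2) * (|x| + 1) ^ (2 * s - 1 / 2)

lemma mwt_nonneg (s x : ℝ) : 0 ≤ mwt s x :=
  mul_nonneg (rpow_nonneg (abs_nonneg _) _) (rpow_nonneg (by positivity) _)

lemma mwt_neg (s x : ℝ) : mwt s (-x) = mwt s x := by simp [mwt, abs_neg]

lemma mwt_eq (s x : ℝ) :
    mwt s x = |x - 1| ^ ((1:ℝ)/2) * |x + 1| ^ ((1:ℝ)/2) * (|x| + 1) ^ (2 * s - 1) := by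
  have h1 : (0:ℝ) < |x| + 1 := by positivity
  have key : |(|x| - 1)| * (|x| + 1) = |x - 1| * |x + 1| := by
    have : |(|x| - 1)| * |(|x| + 1)| = |(x - 1) * (x + 1)| := by
      rw [← abs_mul]; congr 1; nlinarith [sq_abs x]
    rw [abs_mul] at this
    rwa [abs_of_pos h1] at this
  have key2 : |(|x| - 1)| = |x - 1| * |x + 1| * (|x| + 1)⁻¹ := by
    field_simp at key ⊢; linarith [key]
  rw [mwt, key2, mul_rpow (by positivity) (by positivity),
    mul_rpow (abs_nonneg _) (abs_nonneg _),
    ← rpow_neg_one (|x| + 1), ← rpow_mul h1.le, mul_assoc, ← rpow_add h1]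
  ring_nf

lemma mwt_inv_eq (s x : ℝ) :
    (mwt s x)⁻¹ = |x - 1| ^ (-((1:ℝ)/2)) * |x + 1| ^ (-((1:ℝ)/2)) * (|x| + 1) ^ (1 - 2 * s) := by
  rw [mwt_eq, mul_inv, mul_inv, ← rpow_neg (abs_nonneg _), ← rpow_neg (abs_nonneg _),
    ← rpow_neg (by positivity)]
  ring_nf

lemma abs_rpow_II {r : ℝ} (hr : -1 < r) (a b : ℝ) :
    IntervalIntegrable (fun x => |x| ^ r) volume a b := by
  suffices h : ∀ c : ℝ, 0 ≤ c → IntervalIntegrable (fun x : ℝ => |x| ^ r) volume 0 c by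
    have h' : ∀ c : ℝ, IntervalIntegrable (fun x : ℝ => |x| ^ r) volume 0 c := by
      intro c
      rcases le_total 0 c with hc | hc
      · exact h c hc
      · have := (IntervalIntegrable.iff_comp_neg enorm_ne_top).1 (h (-c) (by linarith))
        simpa [abs_neg] using this
    exact (h' a).symm.trans (h' b)
  intro c hc
  refine (intervalIntegral.intervalIntegrable_rpow' hr (a := 0) (b := c)).mono_fun ?_ ?_
  · exact ((measurable_norm.pow_const r).aestronglyMeasurable)
  · rw [Set.uIoc_of_le hc]
    filter_upwards [ae_restrict_mem measurableSet_Ioc] with x hx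
    rw [Real.norm_eq_abs, Real.norm_eq_abs, abs_of_pos hx.1]

lemma abs_sub_rpow_II {r : ℝ} (hr : -1 < r) (c a b : ℝ) :
    IntervalIntegrable (fun x => |x - c| ^ r) volume a b := by
  have := (abs_rpow_II hr (a - c) (b - c)).comp_sub_right c
  simpa using this

lemma int_abs_neg_half {h : ℝ} (hh : 0 ≤ h) :
    ∫ x in (-h)..h, |x| ^ (-((1:ℝ)/2)) = 4 * h ^ ((1:ℝ)/2) := by
  have hr : (-1:ℝ) < -((1:ℝ)/2) := by norm_num
  have h2 : (∫ x in (0:ℝ)..h, |x| ^ (-((1:ℝ)/2))) = 2 * h ^ ((1:ℝ)/2) := by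
    have : (∫ x in (0:ℝ)..h, |x| ^ (-((1:ℝ)/2))) = ∫ x in (0:ℝ)..h, x ^ (-((1:ℝ)/2)) := by
      apply intervalIntegral.integral_congr
      intro x hx
      rw [Set.uIcc_of_le hh] at hx
      simp only [abs_of_nonneg hx.1]
    rw [this, integral_rpow (Or.inl hr)]
    norm_num
    ring
  have h1 : (∫ x in (-h)..(0:ℝ), |x| ^ (-((1:ℝ)/2))) = 2 * h ^ ((1:ℝ)/2) := by
    have e : (∫ x in (-h)..(0:ℝ), |x| ^ (-((1:ℝ)/2)))
        = ∫ x in (-h)..(0:ℝ), |(-x)| ^ (-((1:ℝ)/2)) := by simp [abs_neg]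
    rw [e, intervalIntegral.integral_comp_neg (f := fun x => |x| ^ (-((1:ℝ)/2)))]
    simpa using h2
  rw [← intervalIntegral.integral_add_adjacent_intervals
    (abs_rpow_II hr (-h) 0) (abs_rpow_II hr 0 h), h1, h2]
  ring

lemma int_abs_sub_neg_half {h : ℝ} (hh : 0 ≤ h) (c : ℝ) :
    ∫ x in (c-h)..(c+h), |x - c| ^ (-((1:ℝ)/2)) = 4 * h ^ ((1:ℝ)/2) := by
  rw [intervalIntegral.integral_comp_sub_right (f := fun t => |t| ^ (-((1:ℝ)/2))) c]
  simpa using int_abs_neg_half hh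

lemma int_one_add_rpow {α L : ℝ} (hα : -1 < α) (hL : 0 ≤ L) :
    ∫ x in (0:ℝ)..L, (1+x) ^ α = ((1+L) ^ (α+1) - 1) / (α+1) := by
  rw [show (∫ x in (0:ℝ)..L, (1+x) ^ α) = ∫ x in (0:ℝ)..L, (x+1) ^ α by
      apply intervalIntegral.integral_congr; intro x _; ring_nf,
    intervalIntegral.integral_comp_add_right (f := fun t => t ^ α) 1,
    integral_rpow (Or.inl hα)]
  norm_num
  rw [add_comm]

lemma mwt_continuous (s : ℝ) : Continuous (mwt s) := by
  apply Continuous.mul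
  · apply Continuous.rpow_const (by continuity)
    intro x; right; norm_num
  · apply Continuous.rpow_const (by continuity)
    intro x; left; positivity

lemma mwt_II (s a b : ℝ) : IntervalIntegrable (mwt s) volume a b :=
  (mwt_continuous s).intervalIntegrable a b

lemma uv_le (x : ℝ) : |x - 1| ^ (-((1:ℝ)/2)) * |x + 1| ^ (-((1:ℝ)/2))
    ≤ |x - 1| ^ (-((1:ℝ)/2)) + |x + 1| ^ (-((1:ℝ)/2)) := by
  rcases le_total 0 x with hx | hx
  · have h1 : (1:ℝ) ≤ |x + 1| := by rw [abs_of_nonneg (by linarith)]; linarith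
    have : |x + 1| ^ (-((1:ℝ)/2)) ≤ 1 :=
      rpow_le_one_of_one_le_of_nonpos h1 (by norm_num)
    nlinarith [rpow_nonneg (abs_nonneg (x-1)) (-((1:ℝ)/2)),
      rpow_nonneg (abs_nonneg (x+1)) (-((1:ℝ)/2))]
  · have h1 : (1:ℝ) ≤ |x - 1| := by rw [abs_of_nonpos (by linarith)]; linarith
    have : |x - 1| ^ (-((1:ℝ)/2)) ≤ 1 :=
      rpow_le_one_of_one_le_of_nonpos h1 (by norm_num)
    nlinarith [rpow_nonneg (abs_nonneg (x-1)) (-((1:ℝ)/2)),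
      rpow_nonneg (abs_nonneg (x+1)) (-((1:ℝ)/2))]

lemma mwt_inv_nonneg (s x : ℝ) : 0 ≤ (mwt s x)⁻¹ := by
  rw [mwt_inv_eq]; positivity

lemma mwt_inv_II (s : ℝ) (hs1 : -(1/2) < s) (hs2 : s < 1/2) (a b : ℝ) :
    IntervalIntegrable (fun x => (mwt s x)⁻¹) volume a b := by
  set R := max |a| |b| with hR
  have hR0 : 0 ≤ R := le_trans (abs_nonneg a) (le_max_left _ _)
  have hg : IntervalIntegrable
      (fun x => (R+1) ^ (2:ℝ) * (|x - 1| ^ (-((1:ℝ)/2)) + |x + 1| ^ (-((1:ℝ)/2)))) volume a b := by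
    apply IntervalIntegrable.const_mul
    exact (abs_sub_rpow_II (by norm_num) 1 a b).add (by simpa using abs_sub_rpow_II (by norm_num) (-1) a b)
  apply hg.mono_fun'
  · exact (((mwt_continuous s).measurable.inv).aestronglyMeasurable)
  · filter_upwards [ae_restrict_mem measurableSet_uIoc] with x hx
    have hxR : |x| ≤ R := by
      rcases le_total a b with hab | hab
      · rw [Set.uIoc_of_le hab] at hx
        rcases abs_le_max_abs_abs hx.1.le hx.2 with h
        exact le_trans h (le_refl _)
      · rw [Set.uIoc_of_ge hab] at hx
        have := abs_le_max_abs_abs hx.1.le hx.2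
        rw [max_comm] at this
        exact le_trans this (le_refl _)
    have hw : (|x| + 1) ^ (1 - 2*s) ≤ (R+1) ^ (2:ℝ) := by
      calc (|x| + 1) ^ (1 - 2*s) ≤ (R+1) ^ (1 - 2*s) :=
            rpow_le_rpow (by positivity) (by linarith) (by linarith)
        _ ≤ (R+1) ^ (2:ℝ) :=
            rpow_le_rpow_of_exponent_le (by linarith) (by linarith)
    rw [Real.norm_eq_abs, abs_of_nonneg (mwt_inv_nonneg s x), mwt_inv_eq]
    calc |x - 1| ^ (-((1:ℝ)/2)) * |x + 1| ^ (-((1:ℝ)/2)) * (|x| + 1) ^ (1 - 2*s)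
        ≤ (|x - 1| ^ (-((1:ℝ)/2)) + |x + 1| ^ (-((1:ℝ)/2))) * (R+1) ^ (2:ℝ) := by
          apply mul_le_mul (uv_le x) hw (by positivity)
          positivity
      _ = (R+1) ^ (2:ℝ) * (|x - 1| ^ (-((1:ℝ)/2)) + |x + 1| ^ (-((1:ℝ)/2))) := by ring

lemma two_rpow_half_sq : (2:ℝ) ^ ((1:ℝ)/2) * (2:ℝ) ^ ((1:ℝ)/2) = 2 := by
  rw [← rpow_add (by norm_num : (0:ℝ) < 2)]; norm_num

lemma mwt_pos (s : ℝ) {x : ℝ} (h1 : x ≠ 1) (h2 : x ≠ -1) : 0 < mwt s x := by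
  rw [mwt_eq]
  have a1 : (0:ℝ) < |x - 1| := abs_pos.2 (sub_ne_zero.2 h1)
  have a2 : (0:ℝ) < |x + 1| := abs_pos.2 (by intro h; apply h2; linarith)
  have a3 : (0:ℝ) < |x| + 1 := by positivity
  exact mul_pos (mul_pos (rpow_pos_of_pos a1 _) (rpow_pos_of_pos a2 _)) (rpow_pos_of_pos a3 _)

lemma ratio_bound (s : ℝ) (hs1 : -(1/2) < s) (hs2 : s < 1/2) {a b x y : ℝ} (hab : a < b)
    (hfar : ∀ z ∈ Set.Icc a b, b - a ≤ |z - 1| ∧ b - a ≤ |z + 1|)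
    (hx : x ∈ Set.Icc a b) (hy : y ∈ Set.Icc a b) :
    mwt s x ≤ 8 * mwt s y := by
  have hl : 0 < b - a := by linarith
  have hxy : |x - y| ≤ b - a := by
    rw [abs_sub_le_iff]; constructor <;> [linarith [hx.1, hx.2, hy.1, hy.2]; linarith [hx.1, hx.2, hy.1, hy.2]]
  obtain ⟨hfx1, hfx2⟩ := hfar x hx
  obtain ⟨hfy1, hfy2⟩ := hfar y hy
  have hy1 : 0 < |y - 1| := lt_of_lt_of_le hl hfy1
  have hy2 : 0 < |y + 1| := lt_of_lt_of_le hl hfy2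
  have hA : |x - 1| ≤ 2 * |y - 1| := by
    have : |x - 1| ≤ |y - 1| + |x - y| := by
      have := abs_sub_le (x) (y) (1)  -- |x-1| ≤ |x-y| + |y-1|
      linarith [this]
    linarith
  have hB : |x + 1| ≤ 2 * |y + 1| := by
    have : |x + 1| ≤ |y + 1| + |x - y| := by
      have := abs_sub_le (x) (y) (-1)
      have e1 : |x - -1| = |x + 1| := by ring_nf
      have e2 : |y - -1| = |y + 1| := by ring_nf
      rw [e1, e2] at this
      linarith
    linarith
  have hC : |y| + 1 ≤ 2 * (|x| + 1) := by
    have h1 : b - a ≤ |x| + 1 := le_trans hfx1 (by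
      calc |x - 1| ≤ |x| + |(1:ℝ)| := abs_sub _ _
        _ = |x| + 1 := by norm_num)
    have h2 : |y| ≤ |x| + |x - y| := by
      calc |y| = |x - (x - y)| := by ring_nf
        _ ≤ |x| + |x - y| := abs_sub _ _
    linarith
  -- rpow bounds
  have t1 : |x - 1| ^ ((1:ℝ)/2) ≤ 2 ^ ((1:ℝ)/2) * |y - 1| ^ ((1:ℝ)/2) := by
    rw [← mul_rpow (by norm_num) (abs_nonneg _)]
    exact rpow_le_rpow (abs_nonneg _) hA (by norm_num)
  have t2 : |x + 1| ^ ((1:ℝ)/2) ≤ 2 ^ ((1:ℝ)/2) * |y + 1| ^ ((1:ℝ)/2) := by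
    rw [← mul_rpow (by norm_num) (abs_nonneg _)]
    exact rpow_le_rpow (abs_nonneg _) hB (by norm_num)
  have t3 : (|x| + 1) ^ (2*s - 1) ≤ 4 * (|y| + 1) ^ (2*s - 1) := by
    have step : (|x| + 1) ^ (2*s - 1) ≤ ((|y| + 1)/2) ^ (2*s - 1) := by
      apply rpow_le_rpow_of_nonpos (by positivity) (by linarith) (by linarith)
    have e : ((|y| + 1)/2) ^ (2*s - 1) = (|y| + 1) ^ (2*s - 1) / 2 ^ (2*s - 1) := by
      rw [div_rpow (by positivity) (by norm_num)]
    have f : (1:ℝ) / 2 ^ (2*s-1) = 2 ^ (1 - 2*s) := by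
      rw [one_div, ← rpow_neg (by norm_num : (0:ℝ) ≤ 2)]
      ring_nf
    have g : (2:ℝ) ^ (1 - 2*s) ≤ 2 ^ (2:ℝ) := by
      apply rpow_le_rpow_of_exponent_le (by norm_num) (by linarith)
    have g2 : (2:ℝ) ^ (2:ℝ) = 4 := by
      rw [show (2:ℝ) = ((2:ℕ):ℝ) from by norm_num, rpow_natCast]; norm_num
    calc (|x| + 1) ^ (2*s - 1) ≤ (|y| + 1) ^ (2*s - 1) / 2 ^ (2*s - 1) := by rw [← e]; exact step
      _ = (|y| + 1) ^ (2*s - 1) * (1 / 2 ^ (2*s - 1)) := by ring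
      _ = (|y| + 1) ^ (2*s - 1) * 2 ^ (1 - 2*s) := by rw [f]
      _ ≤ (|y| + 1) ^ (2*s - 1) * 2 ^ (2:ℝ) := by
          apply mul_le_mul_of_nonneg_left g (rpow_nonneg (by positivity) _)
      _ = 4 * (|y| + 1) ^ (2*s - 1) := by rw [g2]; ring
  rw [mwt_eq s x, mwt_eq s y]
  have n1 : (0:ℝ) ≤ |x - 1| ^ ((1:ℝ)/2) := rpow_nonneg (abs_nonneg _) _
  have n2 : (0:ℝ) ≤ |x + 1| ^ ((1:ℝ)/2) := rpow_nonneg (abs_nonneg _) _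
  have n3 : (0:ℝ) ≤ (|x| + 1) ^ (2*s - 1) := rpow_nonneg (by positivity) _
  have m1 : (0:ℝ) ≤ 2 ^ ((1:ℝ)/2) * |y - 1| ^ ((1:ℝ)/2) := by positivity
  have m2 : (0:ℝ) ≤ 2 ^ ((1:ℝ)/2) * |y + 1| ^ ((1:ℝ)/2) := by positivity
  calc |x - 1| ^ ((1:ℝ)/2) * |x + 1| ^ ((1:ℝ)/2) * (|x| + 1) ^ (2*s - 1)
      ≤ (2 ^ ((1:ℝ)/2) * |y - 1| ^ ((1:ℝ)/2)) * (2 ^ ((1:ℝ)/2) * |y + 1| ^ ((1:ℝ)/2))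
        * (4 * (|y| + 1) ^ (2*s - 1)) := by
        apply mul_le_mul (mul_le_mul t1 t2 n2 m1) t3 n3
        positivity
    _ = (2 ^ ((1:ℝ)/2) * 2 ^ ((1:ℝ)/2)) * 4
        * (|y - 1| ^ ((1:ℝ)/2) * |y + 1| ^ ((1:ℝ)/2) * (|y| + 1) ^ (2*s - 1)) := by ring
    _ = 8 * (|y - 1| ^ ((1:ℝ)/2) * |y + 1| ^ ((1:ℝ)/2) * (|y| + 1) ^ (2*s - 1)) := by
        rw [two_rpow_half_sq]; norm_num

lemma case1 (s : ℝ) (hs1 : -(1/2) < s) (hs2 : s < 1/2) {a b : ℝ} (hab : a < b)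
    (hfar : ∀ z ∈ Set.Icc a b, b - a ≤ |z - 1| ∧ b - a ≤ |z + 1|) :
    (∫ x in a..b, mwt s x) * (∫ x in a..b, (mwt s x)⁻¹) ≤ 64 * (b - a)^2 := by
  have hl : 0 < b - a := by linarith
  have haI : a ∈ Set.Icc a b := ⟨le_refl a, hab.le⟩
  have hma : 0 < mwt s a := by
    apply mwt_pos
    · intro h; have := (hfar a haI).1; rw [h] at this; simp at this; linarith
    · intro h; have := (hfar a haI).2; rw [h] at this; simp at this; linarith
  have hub : ∀ x ∈ Set.Icc a b, mwt s x ≤ 8 * mwt s a :=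
    fun x hx => ratio_bound s hs1 hs2 hab hfar hx haI
  have hubinv : ∀ x ∈ Set.Icc a b, (mwt s x)⁻¹ ≤ 8 * (mwt s a)⁻¹ := by
    intro x hx
    have hmx : 0 < mwt s x := by
      apply mwt_pos
      · intro h; have := (hfar x hx).1; rw [h] at this; simp at this; linarith
      · intro h; have := (hfar x hx).2; rw [h] at this; simp at this; linarith
    have h8 : mwt s a ≤ 8 * mwt s x := ratio_bound s hs1 hs2 hab hfar haI hx
    rw [inv_le_iff_one_le_mul₀ hmx]
    have : mwt s a * (8 * (mwt s a)⁻¹) = 8 := by field_simp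
    calc (1:ℝ) = (mwt s a) * (mwt s a)⁻¹ := by field_simp
      _ ≤ (8 * mwt s x) * (mwt s a)⁻¹ := by
          apply mul_le_mul_of_nonneg_right h8 (by positivity)
      _ = 8 * (mwt s a)⁻¹ * mwt s x := by ring
  have i1 : (∫ x in a..b, mwt s x) ≤ (b - a) * (8 * mwt s a) := by
    calc (∫ x in a..b, mwt s x) ≤ ∫ _x in a..b, 8 * mwt s a :=
          intervalIntegral.integral_mono_on hab.le (mwt_II s a b)
            intervalIntegrable_const hub
      _ = (b - a) * (8 * mwt s a) := by simp [smul_eq_mul]; ring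
  have i2 : (∫ x in a..b, (mwt s x)⁻¹) ≤ (b - a) * (8 * (mwt s a)⁻¹) := by
    calc (∫ x in a..b, (mwt s x)⁻¹) ≤ ∫ _x in a..b, 8 * (mwt s a)⁻¹ :=
          intervalIntegral.integral_mono_on hab.le (mwt_inv_II s hs1 hs2 a b)
            intervalIntegrable_const hubinv
      _ = (b - a) * (8 * (mwt s a)⁻¹) := by simp [smul_eq_mul]; ring
  have p1 : (0:ℝ) ≤ ∫ x in a..b, mwt s x :=
    intervalIntegral.integral_nonneg hab.le (fun x _ => mwt_nonneg s x)
  calc (∫ x in a..b, mwt s x) * (∫ x in a..b, (mwt s x)⁻¹)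
      ≤ ((b - a) * (8 * mwt s a)) * ((b - a) * (8 * (mwt s a)⁻¹)) := by
        apply mul_le_mul i1 i2 (intervalIntegral.integral_nonneg hab.le
          (fun x _ => mwt_inv_nonneg s x)) (by positivity)
    _ = 64 * (b - a)^2 * (mwt s a * (mwt s a)⁻¹) := by ring
    _ = 64 * (b - a)^2 := by rw [mul_inv_cancel₀ (ne_of_gt hma)]; ring

lemma rpow_half_self {t : ℝ} (ht : 0 < t) : t ^ ((1:ℝ)/2) * t ^ ((1:ℝ)/2) = t := by
  rw [← rpow_add ht]; norm_num

lemma four_rpow_half : (4:ℝ) ^ ((1:ℝ)/2) = 2 := by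
  rw [show (4:ℝ) = (2:ℝ)^(2:ℕ) from by norm_num, ← rpow_natCast (2:ℝ) 2,
    ← rpow_mul (by norm_num : (0:ℝ) ≤ 2)]
  norm_num

lemma three_rpow_le_nine {c : ℝ} (hc1 : 0 ≤ c) (hc2 : c ≤ 2) : (3:ℝ) ^ c ≤ 9 := by
  calc (3:ℝ) ^ c ≤ (3:ℝ) ^ (2:ℝ) := rpow_le_rpow_of_exponent_le (by norm_num) hc2
    _ = 9 := by
      rw [show (2:ℝ) = ((2:ℕ):ℝ) from by norm_num, rpow_natCast]; norm_num

-- pointwise bounds valid for x ∈ [0,2]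

lemma mwt_le_on02 (s : ℝ) (hs2 : s < 1/2) {x M : ℝ} (hx0 : 0 ≤ x) (hx2 : x ≤ 2)
    (hM : |x - 1| ≤ M) (hM0 : 0 ≤ M) : mwt s x ≤ 2 * M ^ ((1:ℝ)/2) := by
  rw [mwt_eq]
  have b1 : |x - 1| ^ ((1:ℝ)/2) ≤ M ^ ((1:ℝ)/2) := rpow_le_rpow (abs_nonneg _) hM (by norm_num)
  have b2 : |x + 1| ^ ((1:ℝ)/2) ≤ 2 := by
    calc |x + 1| ^ ((1:ℝ)/2) ≤ (4:ℝ) ^ ((1:ℝ)/2) := by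
          apply rpow_le_rpow (abs_nonneg _) _ (by norm_num)
          rw [abs_of_nonneg (by linarith)]; linarith
      _ = 2 := four_rpow_half
  have b3 : (|x| + 1) ^ (2*s - 1) ≤ 1 :=
    rpow_le_one_of_one_le_of_nonpos (by linarith [abs_nonneg x]) (by linarith)
  calc |x - 1| ^ ((1:ℝ)/2) * |x + 1| ^ ((1:ℝ)/2) * (|x| + 1) ^ (2*s - 1)
      ≤ (M ^ ((1:ℝ)/2)) * 2 * 1 := by
        apply mul_le_mul (mul_le_mul b1 b2 (rpow_nonneg (abs_nonneg _) _) (rpow_nonneg hM0 _)) b3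
          (rpow_nonneg (by positivity) _)
          (mul_nonneg (rpow_nonneg hM0 _) (by norm_num))
    _ = 2 * M ^ ((1:ℝ)/2) := by ring

lemma mwt_inv_le_on02 (s : ℝ) (hs1 : -(1/2) < s) (hs2 : s < 1/2) {x : ℝ}
    (hx0 : 0 ≤ x) (hx2 : x ≤ 2) : (mwt s x)⁻¹ ≤ 9 * |x - 1| ^ (-((1:ℝ)/2)) := by
  rw [mwt_inv_eq]
  have b2 : |x + 1| ^ (-((1:ℝ)/2)) ≤ 1 := by
    apply rpow_le_one_of_one_le_of_nonpos _ (by norm_num)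
    rw [abs_of_nonneg (by linarith)]; linarith
  have b3 : (|x| + 1) ^ (1 - 2*s) ≤ 9 := by
    calc (|x| + 1) ^ (1 - 2*s) ≤ (3:ℝ) ^ (1 - 2*s) := by
          apply rpow_le_rpow (by positivity) _ (by linarith)
          rw [abs_of_nonneg hx0]; linarith
      _ ≤ 9 := three_rpow_le_nine (by linarith) (by linarith)
  have n1 : (0:ℝ) ≤ |x - 1| ^ (-((1:ℝ)/2)) := rpow_nonneg (abs_nonneg _) _
  calc |x - 1| ^ (-((1:ℝ)/2)) * |x + 1| ^ (-((1:ℝ)/2)) * (|x| + 1) ^ (1 - 2*s)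
      ≤ (|x - 1| ^ (-((1:ℝ)/2)) * 1) * 9 := by
        apply mul_le_mul (mul_le_mul (le_refl _) b2 (rpow_nonneg (abs_nonneg _) _) n1) b3
          (rpow_nonneg (by positivity) _) (by positivity)
    _ = 9 * |x - 1| ^ (-((1:ℝ)/2)) := by ring

lemma case2a (s : ℝ) (hs1 : -(1/2) < s) (hs2 : s < 1/2) {a b : ℝ} (hab : a < b)
    (hl2 : b - a ≤ 1/2) (hsub1 : 1 - 2*(b-a) ≤ a) (hsub2 : b ≤ 1 + 2*(b-a)) :
    (∫ x in a..b, mwt s x) * (∫ x in a..b, (mwt s x)⁻¹) ≤ 144 * (b - a)^2 := by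
  set l := b - a with hldef
  have hl : 0 < l := by simp [hldef]; linarith
  have hx02 : ∀ x ∈ Set.Icc a b, 0 ≤ x ∧ x ≤ 2 := by
    intro x hx
    constructor
    · have := hx.1; simp only [hldef] at hsub1 ⊢; linarith
    · have := hx.2; linarith
  have i1 : (∫ x in a..b, mwt s x) ≤ l * (2 * (2*l) ^ ((1:ℝ)/2)) := by
    calc (∫ x in a..b, mwt s x) ≤ ∫ _x in a..b, 2 * (2*l) ^ ((1:ℝ)/2) := by
          apply intervalIntegral.integral_mono_on hab.le (mwt_II s a b)
            intervalIntegrable_const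
          intro x hx
          obtain ⟨h0, h2⟩ := hx02 x hx
          apply mwt_le_on02 s hs2 h0 h2 _ (by linarith)
          rw [abs_le]; constructor
          · have := hx.1; linarith
          · have := hx.2; linarith
      _ = l * (2 * (2*l) ^ ((1:ℝ)/2)) := by simp [smul_eq_mul, hldef]; ring
  have i2 : (∫ x in a..b, (mwt s x)⁻¹) ≤ 36 * (2*l) ^ ((1:ℝ)/2) := by
    have step1 : (∫ x in a..b, (mwt s x)⁻¹) ≤ ∫ x in (1-2*l)..(1+2*l), (mwt s x)⁻¹ := by
      apply intervalIntegral.integral_mono_interval hsub1 hab.le hsub2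
      · filter_upwards [] with x; exact mwt_inv_nonneg s x
      · exact mwt_inv_II s hs1 hs2 _ _
    have step2 : (∫ x in (1-2*l)..(1+2*l), (mwt s x)⁻¹)
        ≤ ∫ x in (1-2*l)..(1+2*l), 9 * |x - 1| ^ (-((1:ℝ)/2)) := by
      apply intervalIntegral.integral_mono_on (by linarith) (mwt_inv_II s hs1 hs2 _ _)
        ((abs_sub_rpow_II (by norm_num) 1 _ _).const_mul 9)
      intro x hx
      have h0 : 0 ≤ x := by have := hx.1; linarith
      have h2 : x ≤ 2 := by have := hx.2; linarith
      exact mwt_inv_le_on02 s hs1 hs2 h0 h2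
    have step3 : (∫ x in (1-2*l)..(1+2*l), 9 * |x - 1| ^ (-((1:ℝ)/2)))
        = 36 * (2*l) ^ ((1:ℝ)/2) := by
      rw [intervalIntegral.integral_const_mul]
      have := int_abs_sub_neg_half (h := 2*l) (by linarith) 1
      rw [show (1:ℝ) - 2*l = 1 - 2*l from rfl] at this
      rw [this]; ring
    linarith
  have p2 : (0:ℝ) ≤ ∫ x in a..b, (mwt s x)⁻¹ :=
    intervalIntegral.integral_nonneg hab.le (fun x _ => mwt_inv_nonneg s x)
  have p1 : (0:ℝ) ≤ ∫ x in a..b, mwt s x :=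
    intervalIntegral.integral_nonneg hab.le (fun x _ => mwt_nonneg s x)
  calc (∫ x in a..b, mwt s x) * (∫ x in a..b, (mwt s x)⁻¹)
      ≤ (l * (2 * (2*l) ^ ((1:ℝ)/2))) * (36 * (2*l) ^ ((1:ℝ)/2)) := by
        apply mul_le_mul i1 i2 p2 (by positivity)
    _ = 36 * 2 * l * ((2*l) ^ ((1:ℝ)/2) * (2*l) ^ ((1:ℝ)/2)) := by ring
    _ = 144 * l^2 := by rw [rpow_half_self (by linarith)]; ring

lemma even_int {f : ℝ → ℝ} (hf : ∀ x, f (-x) = f x) {L : ℝ}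
    (h1 : IntervalIntegrable f volume (-L) 0) (h2 : IntervalIntegrable f volume 0 L) :
    ∫ x in (-L)..L, f x = 2 * ∫ x in (0:ℝ)..L, f x := by
  rw [← intervalIntegral.integral_add_adjacent_intervals h1 h2]
  have e : (∫ x in (-L)..(0:ℝ), f x) = ∫ x in (0:ℝ)..L, f x := by
    rw [show (∫ x in (-L)..(0:ℝ), f x) = ∫ x in (-L)..(0:ℝ), f (-x) from by simp [hf],
      intervalIntegral.integral_comp_neg]
    norm_num
  rw [e]; ring

lemma two_rpow_le {c : ℝ} (hc : c ≤ 3) : (2:ℝ) ^ c ≤ 8 := by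
  calc (2:ℝ) ^ c ≤ (2:ℝ) ^ (3:ℝ) := rpow_le_rpow_of_exponent_le (by norm_num) hc
    _ = 8 := by
      rw [show (3:ℝ) = ((3:ℕ):ℝ) from by norm_num, rpow_natCast]; norm_num

lemma mwt_le_pow (s : ℝ) {x : ℝ} (hx : 0 ≤ x) : mwt s x ≤ (x+1) ^ (2*s) := by
  rw [mwt_eq]
  have h1 : (0:ℝ) < x + 1 := by linarith
  have e1 : |x + 1| = x + 1 := abs_of_nonneg (by linarith)
  have e2 : |x| + 1 = x + 1 := by rw [abs_of_nonneg hx]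
  have hA : |x - 1| ≤ x + 1 := by rw [abs_le]; constructor <;> linarith
  have b1 : |x - 1| ^ ((1:ℝ)/2) ≤ (x+1) ^ ((1:ℝ)/2) :=
    rpow_le_rpow (abs_nonneg _) hA (by norm_num)
  calc |x - 1| ^ ((1:ℝ)/2) * |x + 1| ^ ((1:ℝ)/2) * (|x| + 1) ^ (2*s - 1)
      ≤ (x+1) ^ ((1:ℝ)/2) * |x + 1| ^ ((1:ℝ)/2) * (|x| + 1) ^ (2*s - 1) := by
        apply mul_le_mul_of_nonneg_right (mul_le_mul_of_nonneg_right b1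
          (rpow_nonneg (abs_nonneg _) _)) (rpow_nonneg (by positivity) _)
    _ = (x+1) ^ ((1:ℝ)/2 + (1:ℝ)/2 + (2*s - 1)) := by
        rw [e1, e2, rpow_add h1, rpow_add h1]
    _ = (x+1) ^ (2*s) := by norm_num

lemma mwt_inv_le_far (s : ℝ) (hs1 : -(1/2) < s) (hs2 : s < 1/2) {x : ℝ} (hx : 2 ≤ x) :
    (mwt s x)⁻¹ ≤ 8 * x ^ (-(2*s)) := by
  rw [mwt_inv_eq]
  have hx0 : (0:ℝ) < x := by linarith
  have e1 : |x - 1| = x - 1 := abs_of_nonneg (by linarith)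
  have e2 : |x + 1| = x + 1 := abs_of_nonneg (by linarith)
  have e3 : |x| = x := abs_of_nonneg (by linarith)
  have b1 : |x - 1| ^ (-((1:ℝ)/2)) ≤ (x/2) ^ (-((1:ℝ)/2)) := by
    rw [e1]
    exact rpow_le_rpow_of_nonpos (by linarith) (by linarith) (by norm_num)
  have b2 : |x + 1| ^ (-((1:ℝ)/2)) ≤ x ^ (-((1:ℝ)/2)) := by
    rw [e2]
    exact rpow_le_rpow_of_nonpos hx0 (by linarith) (by norm_num)
  have b3 : (|x| + 1) ^ (1 - 2*s) ≤ (2*x) ^ (1 - 2*s) := by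
    rw [e3]
    exact rpow_le_rpow (by linarith) (by linarith) (by linarith)
  have eq1 : (x/2) ^ (-((1:ℝ)/2)) = 2 ^ ((1:ℝ)/2) * x ^ (-((1:ℝ)/2)) := by
    rw [div_rpow (le_of_lt hx0) (by norm_num), rpow_neg (by norm_num : (0:ℝ) ≤ 2)]
    field_simp
  have eq2 : (2*x) ^ (1 - 2*s) = 2 ^ (1 - 2*s) * x ^ (1 - 2*s) :=
    mul_rpow (by norm_num) (le_of_lt hx0)
  calc |x - 1| ^ (-((1:ℝ)/2)) * |x + 1| ^ (-((1:ℝ)/2)) * (|x| + 1) ^ (1 - 2*s)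
      ≤ ((x/2) ^ (-((1:ℝ)/2))) * (x ^ (-((1:ℝ)/2))) * ((2*x) ^ (1 - 2*s)) := by
        apply mul_le_mul (mul_le_mul b1 b2 (rpow_nonneg (abs_nonneg _) _)
            (rpow_nonneg (by positivity) _)) b3
          (rpow_nonneg (by positivity) _)
          (mul_nonneg (rpow_nonneg (by positivity) _) (rpow_nonneg (le_of_lt hx0) _))
    _ = (2 ^ ((1:ℝ)/2) * 2 ^ (1 - 2*s)) *
        (x ^ (-((1:ℝ)/2)) * x ^ (-((1:ℝ)/2)) * x ^ (1 - 2*s)) := by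
        rw [eq1, eq2]; ring
    _ = (2 ^ ((1:ℝ)/2) * 2 ^ (1 - 2*s)) * x ^ (-((1:ℝ)/2) + -((1:ℝ)/2) + (1 - 2*s)) := by
        rw [rpow_add hx0, rpow_add hx0]
    _ = (2 ^ ((1:ℝ)/2 + (1 - 2*s))) * x ^ (-(2*s)) := by
        have he : -((1:ℝ)/2) + -((1:ℝ)/2) + (1 - 2*s) = -(2*s) := by ring
        rw [← rpow_add (by norm_num : (0:ℝ) < 2), he]
    _ ≤ 8 * x ^ (-(2*s)) := by
        apply mul_le_mul_of_nonneg_right (two_rpow_le (by linarith)) (rpow_nonneg (le_of_lt hx0) _)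

lemma one_add_rpow_II {α : ℝ} (hα : -1 < α) (a b : ℝ) :
    IntervalIntegrable (fun x : ℝ => (x+1) ^ α) volume a b := by
  have := (intervalIntegral.intervalIntegrable_rpow' (a := a + 1) (b := b + 1) hα).comp_add_right 1
  simpa using this

lemma case2b (s : ℝ) (hs1 : -(1/2) < s) (hs2 : s < 1/2) {a b : ℝ} (hab : a < b)
    (hl : 1/2 ≤ b - a) (hsub1 : -(4*(b-a)) ≤ a) (hsub2 : b ≤ 4*(b-a)) :
    (∫ x in a..b, mwt s x) * (∫ x in a..b, (mwt s x)⁻¹)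
      ≤ 20480 / ((1+2*s)*(1-2*s)) * (b - a)^2 := by
  set l := b - a with hldef
  set L := 4 * l with hLdef
  have hl0 : 0 < l := by simp only [hldef]; linarith
  have hL2 : 2 ≤ L := by simp only [hLdef]; linarith
  have hL0 : 0 < L := by linarith
  have hs1' : 0 < 1 + 2*s := by linarith
  have hs2' : 0 < 1 - 2*s := by linarith
  -- m side
  have iA : (∫ x in a..b, mwt s x) ≤ ∫ x in (-L)..L, mwt s x := by
    apply intervalIntegral.integral_mono_interval (by linarith) hab.le (by linarith)
      (Filter.Eventually.of_forall (fun x => mwt_nonneg s x)) (mwt_II s _ _)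
  have iB : (∫ x in (-L)..L, mwt s x) = 2 * ∫ x in (0:ℝ)..L, mwt s x :=
    even_int (mwt_neg s) (mwt_II s _ _) (mwt_II s _ _)
  have iC : (∫ x in (0:ℝ)..L, mwt s x) ≤ ∫ x in (0:ℝ)..L, (x+1) ^ (2*s) := by
    apply intervalIntegral.integral_mono_on hL0.le (mwt_II s _ _)
      (one_add_rpow_II (by linarith) _ _)
    exact fun x hx => mwt_le_pow s hx.1
  have iD : (∫ x in (0:ℝ)..L, (x+1) ^ (2*s)) ≤ 4 * L ^ (2*s+1) / (2*s+1) := by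
    have e : (∫ x in (0:ℝ)..L, (x+1) ^ (2*s)) = ((L+1) ^ (2*s+1) - 1) / (2*s+1) := by
      rw [intervalIntegral.integral_comp_add_right (f := fun t : ℝ => t ^ (2*s)) 1,
        integral_rpow (Or.inl (by linarith : (-1:ℝ) < 2*s))]
      norm_num
    rw [e]
    have h1 : (L+1) ^ (2*s+1) ≤ 4 * L ^ (2*s+1) := by
      calc (L+1) ^ (2*s+1) ≤ (2*L) ^ (2*s+1) :=
            rpow_le_rpow (by linarith) (by linarith) (by linarith)
        _ = 2 ^ (2*s+1) * L ^ (2*s+1) := mul_rpow (by norm_num) hL0.le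
        _ ≤ 4 * L ^ (2*s+1) := by
            apply mul_le_mul_of_nonneg_right _ (rpow_nonneg hL0.le _)
            calc (2:ℝ) ^ (2*s+1) ≤ (2:ℝ) ^ (2:ℝ) :=
                  rpow_le_rpow_of_exponent_le (by norm_num) (by linarith)
              _ = 4 := by
                  rw [show (2:ℝ) = ((2:ℕ):ℝ) from by norm_num, rpow_natCast]; norm_num
    have hd : (0:ℝ) < 2*s+1 := by linarith
    exact (div_le_div_iff_of_pos_right hd).2 (by linarith)
  have im : (∫ x in a..b, mwt s x) ≤ 8 * L ^ (2*s+1) / (2*s+1) := by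
    calc (∫ x in a..b, mwt s x) ≤ 2 * ∫ x in (0:ℝ)..L, mwt s x := by rw [← iB]; exact iA
      _ ≤ 2 * (4 * L ^ (2*s+1) / (2*s+1)) := by linarith [iC.trans iD]
      _ = 8 * L ^ (2*s+1) / (2*s+1) := by ring
  -- inverse side
  have jA : (∫ x in a..b, (mwt s x)⁻¹) ≤ ∫ x in (-L)..L, (mwt s x)⁻¹ := by
    apply intervalIntegral.integral_mono_interval (by linarith) hab.le (by linarith)
      (Filter.Eventually.of_forall (fun x => mwt_inv_nonneg s x)) (mwt_inv_II s hs1 hs2 _ _)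
  have jB : (∫ x in (-L)..L, (mwt s x)⁻¹) = 2 * ∫ x in (0:ℝ)..L, (mwt s x)⁻¹ :=
    even_int (fun x => by rw [mwt_neg]) (mwt_inv_II s hs1 hs2 _ _) (mwt_inv_II s hs1 hs2 _ _)
  have jC : (∫ x in (0:ℝ)..L, (mwt s x)⁻¹)
      = (∫ x in (0:ℝ)..2, (mwt s x)⁻¹) + ∫ x in (2:ℝ)..L, (mwt s x)⁻¹ :=
    (intervalIntegral.integral_add_adjacent_intervals
      (mwt_inv_II s hs1 hs2 _ _) (mwt_inv_II s hs1 hs2 _ _)).symm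
  have jD : (∫ x in (0:ℝ)..2, (mwt s x)⁻¹) ≤ 36 := by
    have step : (∫ x in (0:ℝ)..2, (mwt s x)⁻¹)
        ≤ ∫ x in (0:ℝ)..2, 9 * |x - 1| ^ (-((1:ℝ)/2)) := by
      apply intervalIntegral.integral_mono_on (by norm_num) (mwt_inv_II s hs1 hs2 _ _)
        ((abs_sub_rpow_II (by norm_num) 1 _ _).const_mul 9)
      exact fun x hx => mwt_inv_le_on02 s hs1 hs2 hx.1 hx.2
    have e : (∫ x in (0:ℝ)..2, 9 * |x - 1| ^ (-((1:ℝ)/2))) = 36 := by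
      rw [intervalIntegral.integral_const_mul]
      have := int_abs_sub_neg_half (h := 1) (by norm_num) 1
      norm_num at this
      rw [this]; norm_num
    linarith
  have jE : (∫ x in (2:ℝ)..L, (mwt s x)⁻¹) ≤ 8 * L ^ (1-2*s) / (1-2*s) := by
    have step : (∫ x in (2:ℝ)..L, (mwt s x)⁻¹) ≤ ∫ x in (2:ℝ)..L, 8 * x ^ (-(2*s)) := by
      apply intervalIntegral.integral_mono_on (by linarith) (mwt_inv_II s hs1 hs2 _ _)
        ((intervalIntegral.intervalIntegrable_rpow' (by linarith)).const_mul 8)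
      exact fun x hx => mwt_inv_le_far s hs1 hs2 hx.1
    have step2 : (∫ x in (2:ℝ)..L, 8 * x ^ (-(2*s))) ≤ 8 * (L ^ (1-2*s) / (1-2*s)) := by
      rw [intervalIntegral.integral_const_mul]
      apply mul_le_mul_of_nonneg_left _ (by norm_num)
      have mono : (∫ x in (2:ℝ)..L, x ^ (-(2*s))) ≤ ∫ x in (0:ℝ)..L, x ^ (-(2*s)) := by
        apply intervalIntegral.integral_mono_interval (by norm_num) (by linarith) le_rfl
          _ (intervalIntegral.intervalIntegrable_rpow' (by linarith))
        filter_upwards [ae_restrict_mem measurableSet_Ioc] with x hx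
        exact rpow_nonneg hx.1.le _
      have e : (∫ x in (0:ℝ)..L, x ^ (-(2*s))) = L ^ (1-2*s) / (1-2*s) := by
        rw [integral_rpow (Or.inl (by linarith : (-1:ℝ) < -(2*s)))]
        rw [zero_rpow (by linarith : -(2*s) + 1 ≠ 0)]
        norm_num
        rw [show -(2*s) + 1 = 1 - 2*s from by ring]
      linarith
    calc (∫ x in (2:ℝ)..L, (mwt s x)⁻¹) ≤ ∫ x in (2:ℝ)..L, 8 * x ^ (-(2*s)) := step
      _ ≤ 8 * (L ^ (1-2*s) / (1-2*s)) := step2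
      _ = 8 * L ^ (1-2*s) / (1-2*s) := by ring
  have hLr : (1:ℝ) ≤ L ^ (1-2*s) := one_le_rpow (by linarith) (by linarith)
  have j36 : (36:ℝ) ≤ 72 * L ^ (1-2*s) / (1-2*s) := by
    rw [div_eq_mul_inv, ge_iff_le.symm]
    have h2 : (1:ℝ)/2 ≤ ((1-2*s))⁻¹ := by
      rw [le_inv_comm₀]
      · linarith
      · norm_num
      · exact hs2'
    calc (36:ℝ) = 72 * (1/2) := by norm_num
      _ ≤ 72 * (1 * ((1-2*s))⁻¹) := by
          apply mul_le_mul_of_nonneg_left _ (by norm_num)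
          rw [one_mul]; exact h2
      _ ≤ 72 * (L ^ (1-2*s) * ((1-2*s))⁻¹) := by
          apply mul_le_mul_of_nonneg_left _ (by norm_num)
          apply mul_le_mul_of_nonneg_right hLr (by positivity)
      _ = 72 * L ^ (1-2*s) * (1-2*s)⁻¹ := by ring
  have jm : (∫ x in a..b, (mwt s x)⁻¹) ≤ 160 * L ^ (1-2*s) / (1-2*s) := by
    calc (∫ x in a..b, (mwt s x)⁻¹) ≤ 2 * ∫ x in (0:ℝ)..L, (mwt s x)⁻¹ := by
          rw [← jB]; exact jA
      _ ≤ 2 * (36 + 8 * L ^ (1-2*s) / (1-2*s)) := by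
          rw [jC] at *
          linarith [jD, jE]
      _ ≤ 2 * (72 * L ^ (1-2*s) / (1-2*s) + 8 * L ^ (1-2*s) / (1-2*s)) := by
          linarith [j36]
      _ = 160 * L ^ (1-2*s) / (1-2*s) := by ring
  -- combine
  have pm : (0:ℝ) ≤ ∫ x in a..b, (mwt s x)⁻¹ :=
    intervalIntegral.integral_nonneg hab.le (fun x _ => mwt_inv_nonneg s x)
  have hLL : L ^ (2*s+1) * L ^ (1-2*s) = L^2 := by
    rw [← rpow_add hL0, show 2*s+1 + (1-2*s) = (2:ℝ) from by ring,
      show (2:ℝ) = ((2:ℕ):ℝ) from by norm_num, rpow_natCast]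
  have hrhs : (0:ℝ) ≤ 8 * L ^ (2*s+1) / (2*s+1) := by
    apply div_nonneg (by positivity) (by linarith)
  calc (∫ x in a..b, mwt s x) * (∫ x in a..b, (mwt s x)⁻¹)
      ≤ (8 * L ^ (2*s+1) / (2*s+1)) * (160 * L ^ (1-2*s) / (1-2*s)) :=
        mul_le_mul im jm pm hrhs
    _ = 1280 * (L ^ (2*s+1) * L ^ (1-2*s)) * ((2*s+1)⁻¹ * (1-2*s)⁻¹) := by ring
    _ = 1280 * (16 * l^2) * ((2*s+1) * (1-2*s))⁻¹ := by
        have h16 : L^2 = 16 * l^2 := by rw [hLdef]; ring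
        rw [hLL, h16, ← mul_inv]
    _ = 20480 / ((1+2*s)*(1-2*s)) * l^2 := by
        rw [div_eq_mul_inv]; ring

theorem stmt7 (s : ℝ) (hs1 : -(1 / 2) < s) (hs2 : s < 1 / 2) :
    ∃ C > 0, ∀ a b : ℝ, a < b →
      ((b - a)⁻¹ * ∫ x in a..b, mwt s x) * ((b - a)⁻¹ * ∫ x in a..b, (mwt s x)⁻¹) ≤ C := by
  have hd : (0:ℝ) < (1+2*s)*(1-2*s) := mul_pos (by linarith) (by linarith)
  have hd1 : (1+2*s)*(1-2*s) ≤ 1 := by nlinarith [sq_nonneg s]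
  refine ⟨1000000 / ((1+2*s)*(1-2*s)), div_pos (by norm_num) hd, ?_⟩
  intro a b hab
  have hl0 : (0:ℝ) < b - a := by linarith
  have key : (∫ x in a..b, mwt s x) * (∫ x in a..b, (mwt s x)⁻¹)
      ≤ 1000000 / ((1+2*s)*(1-2*s)) * (b-a)^2 := by
    have hsq : (0:ℝ) ≤ (b-a)^2 := sq_nonneg _
    have big : ∀ K : ℝ, 0 ≤ K → K ≤ 1000000 →
        K * (b-a)^2 ≤ 1000000 / ((1+2*s)*(1-2*s)) * (b-a)^2 := by
      intro K hK0 hK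
      apply mul_le_mul_of_nonneg_right _ hsq
      rw [le_div_iff₀ hd]
      nlinarith
    by_cases hnear : ∃ x ∈ Set.Icc a b, |x - 1| < b - a ∨ |x + 1| < b - a
    · obtain ⟨x, hx, hcase⟩ := hnear
      rcases le_or_gt (b - a) (1/2) with hsmall | hbig2
      · -- small interval near a singularity
        rcases hcase with h1 | h2
        · have h1' := abs_lt.1 h1
          have bnd := case2a s hs1 hs2 hab hsmall
            (by linarith [hx.1, hx.2]) (by linarith [hx.1, hx.2])
          calc (∫ x in a..b, mwt s x) * (∫ x in a..b, (mwt s x)⁻¹) ≤ 144 * (b-a)^2 := bnd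
            _ ≤ _ := big 144 (by norm_num) (by norm_num)
        · have h2' := abs_lt.1 h2
          have e1 : (∫ x in a..b, mwt s x) = ∫ x in (-b)..(-a), mwt s x := by
            rw [show (∫ x in a..b, mwt s x) = ∫ x in a..b, mwt s (-x) from by
              simp [mwt_neg], intervalIntegral.integral_comp_neg]
          have e2 : (∫ x in a..b, (mwt s x)⁻¹) = ∫ x in (-b)..(-a), (mwt s x)⁻¹ := by
            rw [show (∫ x in a..b, (mwt s x)⁻¹) = ∫ x in a..b, (mwt s (-x))⁻¹ from by
              simp [mwt_neg], intervalIntegral.integral_comp_neg (f := fun x => (mwt s x)⁻¹)]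
          have hab' : -b < -a := by linarith
          have hsmall' : -a - -b ≤ 1/2 := by rw [show -a - -b = b - a from by ring]; exact hsmall
          have bnd := case2a s hs1 hs2 hab' hsmall'
            (by rw [show -a - -b = b - a from by ring]; linarith [hx.1, hx.2])
            (by rw [show -a - -b = b - a from by ring]; linarith [hx.1, hx.2])
          rw [e1, e2]
          calc (∫ x in (-b)..(-a), mwt s x) * (∫ x in (-b)..(-a), (mwt s x)⁻¹)
              ≤ 144 * (-a - -b)^2 := bnd
            _ = 144 * (b-a)^2 := by ring_nf
            _ ≤ _ := big 144 (by norm_num) (by norm_num)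
      · -- large interval
        have hxabs : |x| < 1 + (b - a) := by
          rcases hcase with h | h
          · have := abs_lt.1 h
            rw [abs_lt]; constructor <;> linarith
          · have := abs_lt.1 h
            rw [abs_lt]; constructor <;> linarith
        have hx' := abs_lt.1 hxabs
        have bnd := case2b s hs1 hs2 hab (le_of_lt hbig2)
          (by nlinarith [hx.1, hx.2]) (by nlinarith [hx.1, hx.2])
        calc (∫ x in a..b, mwt s x) * (∫ x in a..b, (mwt s x)⁻¹)
            ≤ 20480 / ((1+2*s)*(1-2*s)) * (b-a)^2 := bnd
          _ ≤ 1000000 / ((1+2*s)*(1-2*s)) * (b-a)^2 := by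
              apply mul_le_mul_of_nonneg_right _ hsq
              have h20 : (20480:ℝ) * ((1+2*s)*(1-2*s))⁻¹ ≤ 1000000 * ((1+2*s)*(1-2*s))⁻¹ :=
                mul_le_mul_of_nonneg_right (by norm_num) (inv_nonneg.2 hd.le)
              simpa [div_eq_mul_inv] using h20
    · push_neg at hnear
      have hfar : ∀ z ∈ Set.Icc a b, b - a ≤ |z - 1| ∧ b - a ≤ |z + 1| := by
        intro z hz
        obtain ⟨u, v⟩ := hnear z hz
        exact ⟨u, v⟩
      have bnd := case1 s hs1 hs2 hab hfar
      calc (∫ x in a..b, mwt s x) * (∫ x in a..b, (mwt s x)⁻¹) ≤ 64 * (b-a)^2 := bnd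
        _ ≤ _ := big 64 (by norm_num) (by norm_num)
  have hg : ((b-a)⁻¹ * ∫ x in a..b, mwt s x) * ((b-a)⁻¹ * ∫ x in a..b, (mwt s x)⁻¹)
      = ((∫ x in a..b, mwt s x) * ∫ x in a..b, (mwt s x)⁻¹) / (b-a)^2 := by
    have e : ((b-a)^2)⁻¹ = (b-a)⁻¹ * (b-a)⁻¹ := by rw [sq, mul_inv]
    rw [div_eq_mul_inv, e]
    ring
  rw [hg, div_le_iff₀ (by positivity : (0:ℝ) < (b-a)^2)]
  exact key
end
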